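/- arXiv:2007.08144 — 5 statements merged into one kernel-verified Lean document; each statement's English description precedes it below -/
import Mathlib

section
/- Let 𝒢 = (G⁰, 𝒢¹, r, s) be an ultragraph and let 𝒢⁰ denote the smallest subset of the power set of G⁰ containing all singletons {v} for v ∈ G⁰ and all ranges r(e) for e ∈ 𝒢¹, and closed under finite unions and finite intersections. Then 𝒢⁰ = { ⋂_{e∈X₁} r(e) ∪ ⋯ ∪ ⋂_{e∈Xₙ} r(e) ∪ F : X₁,…,Xₙ are finite nonempty subsets of 𝒢¹ and F is a finite subset of G⁰ }, and moreover F may be chosen disjoint from the union of the intersections. -/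
set_option maxHeartbeats 1000000
set_option synthInstance.maxHeartbeats 400000

open scoped BigOperators

/-- An ultragraph: countable sets of vertices and edges, a source map, and a
range map taking values in nonempty subsets of vertices. -/
structure Ultragraph where
  V : Type
  E : Type
  countableV : Countable V
  countableE : Countable E
  src : E → V
  rng : E → Set V
  rng_nonempty : ∀ e, (rng e).Nonempty

namespace Ultragraph

variable (G : Ultragraph)

/-- Membership in `𝒢⁰`: the smallest collection of subsets of vertices containing
all singletons and all edge ranges, and closed under finite unions and finite
intersections (in particular it contains the empty set, the empty union). -/
inductive Mem0 : Set G.V → Prop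
  | empty : Mem0 ∅
  | singleton (v : G.V) : Mem0 {v}
  | range (e : G.E) : Mem0 (G.rng e)
  | union {A B : Set G.V} : Mem0 A → Mem0 B → Mem0 (A ∪ B)
  | inter {A B : Set G.V} : Mem0 A → Mem0 B → Mem0 (A ∩ B)

/-- The collection `𝒢⁰`. -/
def G0 : Set (Set G.V) := {A | G.Mem0 A}

/-- The set of edges emitted by a vertex. -/
def emitted (v : G.V) : Set G.E := {e | G.src e = v}

/-- A regular vertex emits at least one and finitely many edges. -/
def IsRegular (v : G.V) : Prop := (G.emitted v).Nonempty ∧ (G.emitted v).Finite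

/-- A sink emits no edges. -/
def IsSink (v : G.V) : Prop := G.emitted v = ∅

/-- A singular vertex is a sink or an infinite emitter. -/
def IsSingular (v : G.V) : Prop := G.IsSink v ∨ (G.emitted v).Infinite

/-- A (finite, positive length) path is a list of edges `e₁ ⋯ eₙ` with
`s(e_{i+1}) ∈ r(e_i)`. -/
def IsPathList (l : List G.E) : Prop := l.Chain' (fun e f => G.src f ∈ G.rng e)

/-- A cycle is a nonempty path `e₁ ⋯ eₙ` with `s(e₁) ∈ r(eₙ)`. -/
def IsCycle (l : List G.E) : Prop :=
  ∃ h : l ≠ [], G.IsPathList l ∧ G.src (l.head h) ∈ G.rng (l.getLast h)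

/-- An ultragraph is acyclic if it has no cycles. -/
def Acyclic : Prop := ∀ l : List G.E, ¬ G.IsCycle l

/-- An exit for a cycle `e₁ ⋯ eₙ`: either an edge `f` with `s(f) ∈ r(e_i)` and
`f ≠ e_{i+1}` (indices mod `n`), or a sink `w ∈ r(e_i)` for some `i`. -/
def HasExit (l : List G.E) : Prop :=
  ∃ i : Fin l.length,
    (∃ f : G.E, G.src f ∈ G.rng (l.get i) ∧
        f ≠ l.get ⟨((i : ℕ) + 1) % l.length, Nat.mod_lt _ i.pos⟩) ∨
    (∃ w ∈ G.rng (l.get i), G.IsSink w)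

/-- The ranges of finite paths starting at `v` (including the length-zero
path `{v}`). -/
def pathRangesFrom (v : G.V) : Set (Set G.V) :=
  {A | A = {v} ∨ ∃ (l : List G.E) (h : l ≠ []),
    G.IsPathList l ∧ G.src (l.head h) = v ∧ A = G.rng (l.getLast h)}

/-- `w ≥ v`: there is a path from `w` whose range contains `v`. -/
def Geq (w v : G.V) : Prop := ∃ A ∈ G.pathRangesFrom w, v ∈ A

/-- `v → A`: finitely many paths starting at `v` whose ranges cover `A`. -/
def ConnectsSet (v : G.V) (A : Set G.V) : Prop :=
  ∃ (n : ℕ) (B : Fin n → Set G.V),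
    (∀ i, B i ∈ G.pathRangesFrom v) ∧ A ⊆ ⋃ i, B i

/-- An infinite path. -/
def IsInfinitePath (α : ℕ → G.E) : Prop := ∀ i, G.src (α (i + 1)) ∈ G.rng (α i)

/-- Condition (1): every vertex connects to every infinite path. -/
def CondInfPaths : Prop :=
  ∀ α : ℕ → G.E, G.IsInfinitePath α → ∀ v : G.V, ∃ i, G.Geq v (G.src (α i))

/-- Condition (2): `G⁰ ≥ {v}` for every singular vertex `v`. -/
def CondSingular : Prop :=
  ∀ v : G.V, G.IsSingular v → ∀ w : G.V, G.Geq w v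

/-- Condition (3): for every edge with infinite range and every vertex `w`
there is a cofinite subset of the range covered by paths from `w`. -/
def CondInfRange : Prop :=
  ∀ e : G.E, (G.rng e).Infinite → ∀ w : G.V,
    ∃ A ⊆ G.rng e, (G.rng e \ A).Finite ∧ G.ConnectsSet w A

/-- A hereditary collection `ℋ ⊆ 𝒢⁰`. -/
def Hereditary (H : Set (Set G.V)) : Prop :=
  (∀ A ∈ H, G.Mem0 A) ∧
  (∀ e : G.E, {G.src e} ∈ H → G.rng e ∈ H) ∧
  (∀ A ∈ H, ∀ B ∈ H, A ∪ B ∈ H) ∧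
  (∀ A ∈ H, ∀ B : Set G.V, G.Mem0 B → B ⊆ A → B ∈ H)

/-- A saturated collection. -/
def Saturated (H : Set (Set G.V)) : Prop :=
  ∀ v : G.V, G.IsRegular v → (∀ e : G.E, G.src e = v → G.rng e ∈ H) → {v} ∈ H

/-- The only saturated hereditary collections are the trivial ones:
(at most) `{∅}` and all of `𝒢⁰`. -/
def OnlyTrivialSatHer : Prop :=
  ∀ H : Set (Set G.V), G.Hereditary H → G.Saturated H → H ⊆ {∅} ∨ H = G.G0

/-- The smallest saturated hereditary collection containing `H`. -/
def satHerClosure (H : Set (Set G.V)) : Set (Set G.V) :=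
  ⋂₀ {H' : Set (Set G.V) | G.Hereditary H' ∧ G.Saturated H' ∧ H ⊆ H'}

/-- `Sₙ`-operation: regular vertices all of whose emitted edge ranges lie in `X`. -/
def Sset (X : Set (Set G.V)) : Set G.V :=
  {w | G.IsRegular w ∧ ∀ e : G.E, G.src e = w → G.rng e ∈ X}

/-- The chain `ℋ₀ := ℋ`, `ℋ_{n+1} := {A ∪ F : A ∈ ℋₙ, F finite ⊆ Sₙ}`. -/
def hchain (H : Set (Set G.V)) : ℕ → Set (Set G.V)
  | 0 => H
  | n + 1 => {B | ∃ A ∈ hchain H n, ∃ F : Finset G.V,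
      (F : Set G.V) ⊆ G.Sset (hchain H n) ∧ B = A ∪ (F : Set G.V)}

/-- A vertex connects to a cycle. -/
def ConnectsToCycle (v : G.V) : Prop :=
  ∃ l : List G.E, G.IsCycle l ∧ ∃ e ∈ l, G.Geq v (G.src e)

/-- A path ends at the vertex `v` (the empty list stands for the length-zero
path `{v}`). -/
def EndsAt (l : List G.E) (v : G.V) : Prop :=
  G.IsPathList l ∧ ∀ h : l ≠ [], G.rng (l.getLast h) = {v}

/-- `c⁰`: the subsets (in `𝒢⁰`) of the set of sources of the edges of `c`. -/
def cZero (c : List G.E) : Set (Set G.V) :=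
  {A | G.Mem0 A ∧ A ⊆ {w | ∃ e ∈ c, G.src e = w}}

end Ultragraph

section RingDefs

variable (R : Type) [NonUnitalRing R]

/-- A ring has local units if every finite subset lies in a corner `eRe`. -/
def HasLocalUnits : Prop :=
  ∀ S : Finset R, ∃ e : R, e * e = e ∧ ∀ x ∈ S, e * x = x ∧ x * e = x

/-- `R` is a division ring: it has an identity and nonzero elements are invertible. -/
def IsDivisionRingLike : Prop :=
  ∃ u : R, (∀ x : R, u * x = x ∧ x * u = x) ∧ u ≠ 0 ∧
    ∀ x : R, x ≠ 0 → ∃ y : R, x * y = u ∧ y * x = u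

/-- An infinite idempotent: `eR` is isomorphic to a proper direct summand of
itself; algebraically, `e = f + g` with `f, g` orthogonal idempotents, `g ≠ 0`,
and `eR ≅ fR` (witnessed by `a, b` with `ab = e`, `ba = f`). -/
def IsInfiniteIdem (e : R) : Prop :=
  e * e = e ∧ ∃ f g : R, f * f = f ∧ g * g = g ∧ f * g = 0 ∧ g * f = 0 ∧
    f + g = e ∧ g ≠ 0 ∧ ∃ a b : R, a * b = e ∧ b * a = f

/-- `R` is purely infinite: every nonzero right ideal contains an infinite
idempotent. -/
def PurelyInfinite : Prop :=
  ∀ I : AddSubgroup R, (∀ x ∈ I, ∀ r : R, x * r ∈ I) → I ≠ ⊥ →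
    ∃ e ∈ I, IsInfiniteIdem R e

/-- A simple ring: nonzero multiplication and no nontrivial two-sided ideals. -/
def RingIsSimple : Prop :=
  (∃ a b : R, a * b ≠ 0) ∧
    ∀ I : AddSubgroup R, (∀ x ∈ I, ∀ r : R, x * r ∈ I ∧ r * x ∈ I) →
      I = ⊥ ∨ I = ⊤

/-- Purely infinite simple ring. -/
def PurelyInfiniteSimple : Prop := RingIsSimple R ∧ PurelyInfinite R

/-- von Neumann regularity. -/
def IsVonNeumannRegularRing : Prop := ∀ a : R, ∃ b : R, a = a * b * a

end RingDefs

section AlgDefs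

variable (K : Type) [Field K]

/-- A matricial `K`-algebra: isomorphic (as a `K`-algebra) to a finite direct
sum of full finite-dimensional matrix algebras over `K`. -/
def IsMatricialAlgebra (B : Type) [NonUnitalRing B] [Module K B] : Prop :=
  ∃ (n : ℕ) (d : Fin n → ℕ)
    (e : B ≃+* (∀ i : Fin n, Matrix (Fin (d i)) (Fin (d i)) K)),
    ∀ (k : K) (x : B), e (k • x) = k • e x

/-- A locally matricial `K`-algebra: a directed union of matricial subalgebras. -/
def IsLocallyMatricial (A : Type) [NonUnitalRing A] [Module K A] : Prop :=
  ∃ (ι : Type) (B : ι → NonUnitalSubalgebra K A),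
    (∀ i j, ∃ k, B i ≤ B k ∧ B j ≤ B k) ∧
    (∀ x : A, ∃ i, x ∈ B i) ∧
    ∀ i, IsMatricialAlgebra K (B i)

/-- `I` is the two-sided ideal of the non-unital `K`-algebra `A` generated by
the set `s`. -/
def IsIdealGeneratedBy (A : Type) [NonUnitalRing A] [Module K A]
    (I : NonUnitalSubalgebra K A) (s : Set A) : Prop :=
  s ⊆ (I : Set A) ∧ (∀ x ∈ I, ∀ a : A, a * x ∈ I ∧ x * a ∈ I) ∧
    ∀ J : NonUnitalSubalgebra K A, s ⊆ (J : Set A) →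
      (∀ x ∈ J, ∀ a : A, a * x ∈ J ∧ x * a ∈ J) → I ≤ J

end AlgDefs

namespace Ultragraph

/-- Generators of the ultragraph Leavitt path algebra. -/
inductive LGen (G : Ultragraph) : Type
  | pr : {A : Set G.V // G.Mem0 A} → LGen G
  | ed : G.E → LGen G
  | st : G.E → LGen G

variable (K : Type) [Field K] (G : Ultragraph)

/-- The generator `p_A` in the free algebra. -/
noncomputable def genP (A : Set G.V) (h : G.Mem0 A) : FreeAlgebra K (LGen G) :=
  FreeAlgebra.ι K (LGen.pr ⟨A, h⟩)

/-- The generator `s_e` in the free algebra. -/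
noncomputable def genS (e : G.E) : FreeAlgebra K (LGen G) :=
  FreeAlgebra.ι K (LGen.ed e)

/-- The generator `s*_e` in the free algebra. -/
noncomputable def genT (e : G.E) : FreeAlgebra K (LGen G) :=
  FreeAlgebra.ι K (LGen.st e)

/-- The defining relations of the ultragraph Leavitt path algebra. -/
inductive LRel : FreeAlgebra K (LGen G) → FreeAlgebra K (LGen G) → Prop
  | pEmpty : LRel (genP K G ∅ Mem0.empty) 0
  | pMul {A B : Set G.V} (hA : G.Mem0 A) (hB : G.Mem0 B) :
      LRel (genP K G A hA * genP K G B hB) (genP K G (A ∩ B) (hA.inter hB))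
  | pUnion {A B : Set G.V} (hA : G.Mem0 A) (hB : G.Mem0 B) :
      LRel (genP K G (A ∪ B) (hA.union hB))
        (genP K G A hA + genP K G B hB - genP K G (A ∩ B) (hA.inter hB))
  | srcMul (e : G.E) :
      LRel (genP K G {G.src e} (Mem0.singleton _) * genS K G e) (genS K G e)
  | mulRng (e : G.E) :
      LRel (genS K G e * genP K G (G.rng e) (Mem0.range e)) (genS K G e)
  | rngStar (e : G.E) :
      LRel (genP K G (G.rng e) (Mem0.range e) * genT K G e) (genT K G e)
  | starSrc (e : G.E) :
      LRel (genT K G e * genP K G {G.src e} (Mem0.singleton _)) (genT K G e)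
  | starMulSame (e : G.E) :
      LRel (genT K G e * genS K G e) (genP K G (G.rng e) (Mem0.range e))
  | starMulDiff {e f : G.E} (h : e ≠ f) : LRel (genT K G e * genS K G f) 0
  | ck (v : G.V) (h : G.IsRegular v) :
      LRel (genP K G {v} (Mem0.singleton v))
        (∑ e ∈ h.2.toFinset, genS K G e * genT K G e)

/-- The unital envelope: the quotient of the free algebra by the relations. -/
abbrev LPAEnv := RingQuot (LRel K G)

/-- The quotient map. -/
noncomputable def lmk : FreeAlgebra K (LGen G) →ₐ[K] LPAEnv K G :=
  RingQuot.mkAlgHom K (LRel K G)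

/-- The Leavitt path algebra of the ultragraph `G`, as the non-unital
subalgebra of the unital envelope generated by the generators. -/
noncomputable def LPAsub : NonUnitalSubalgebra K (LPAEnv K G) :=
  NonUnitalAlgebra.adjoin K
    (Set.range fun g : LGen G => lmk K G (FreeAlgebra.ι K g))

/-- The Leavitt path algebra `L_K(𝒢)` (as a type). -/
abbrev LPA := ↥(LPAsub K G)

/-- The element `p_A` of `L_K(𝒢)`. -/
noncomputable def p (A : Set G.V) (h : G.Mem0 A) : LPA K G :=
  ⟨lmk K G (genP K G A h),
   NonUnitalAlgebra.subset_adjoin K ⟨LGen.pr ⟨A, h⟩, rfl⟩⟩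

/-- The element `s_e` of `L_K(𝒢)`. -/
noncomputable def se (e : G.E) : LPA K G :=
  ⟨lmk K G (genS K G e),
   NonUnitalAlgebra.subset_adjoin K ⟨LGen.ed e, rfl⟩⟩

/-- The element `s*_e` of `L_K(𝒢)`. -/
noncomputable def st (e : G.E) : LPA K G :=
  ⟨lmk K G (genT K G e),
   NonUnitalAlgebra.subset_adjoin K ⟨LGen.st e, rfl⟩⟩

/-- `s_α` for a path `α` ending at `v` (the empty path giving `p_{v}`). -/
noncomputable def spath (v : G.V) : List G.E → LPA K G
  | [] => p K G {v} (Mem0.singleton v)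
  | e :: l => se K G e * spath v l

/-- `s*_β` for a path `β` ending at `v`. -/
noncomputable def gpath (v : G.V) : List G.E → LPA K G
  | [] => p K G {v} (Mem0.singleton v)
  | e :: l => gpath v l * st K G e

/-- `s_c^n` for a cycle `c` based at `v`. -/
noncomputable def scn (v : G.V) (c : List G.E) : ℕ → LPA K G
  | 0 => p K G {v} (Mem0.singleton v)
  | n + 1 => spath K G v c * scn v c n

/-- `(s*_c)^n` for a cycle `c` based at `v`. -/
noncomputable def gcn (v : G.V) (c : List G.E) : ℕ → LPA K G
  | 0 => p K G {v} (Mem0.singleton v)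
  | n + 1 => gpath K G v c * gcn v c n

/-- `s_c^k` for `k : ℤ` (negative powers being powers of `s*_c`). -/
noncomputable def scz (v : G.V) (c : List G.E) : ℤ → LPA K G
  | Int.ofNat n => scn K G v c n
  | Int.negSucc n => gcn K G v c (n + 1)

end Ultragraph

section LaurentMatrices

variable (K : Type) [Field K] (Λ : Type)

/-- The `Λ×Λ` matrix over `K[x,x⁻¹]` with entry `r` at `(a,b)` and zero
elsewhere, realized as a `K`-linear endomorphism of `Λ →₀ K[x,x⁻¹]`. -/
noncomputable def matUnit (a b : Λ) (r : LaurentPolynomial K) :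
    Module.End K (Λ →₀ LaurentPolynomial K) :=
  (Finsupp.lsingle a).comp ((LinearMap.mulLeft K r).comp (Finsupp.lapply b))

/-- `M_Λ(K[x,x⁻¹])`: the non-unital `K`-algebra of `Λ×Λ` matrices over the
Laurent polynomial ring with finitely many nonzero entries. -/
noncomputable def FinMatLaurent :
    NonUnitalSubalgebra K (Module.End K (Λ →₀ LaurentPolynomial K)) :=
  NonUnitalAlgebra.adjoin K
    (Set.range fun t : Λ × Λ × LaurentPolynomial K => matUnit K Λ t.1 t.2.1 t.2.2)

end LaurentMatrices



namespace Ultragraph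
variable (G : Ultragraph)

lemma mem0_finset (F : Finset G.V) : G.Mem0 (F : Set G.V) := by
  classical
  induction F using Finset.induction_on with
  | empty => simpa using Mem0.empty
  | @insert a s _ ih =>
      rw [Finset.coe_insert, Set.insert_eq]
      exact Mem0.union (Mem0.singleton a) ih

lemma mem0_biInter (X : Finset G.E) (hX : X.Nonempty) :
    G.Mem0 (⋂ e ∈ X, G.rng e) := by
  classical
  induction X using Finset.induction_on with
  | empty => exact absurd hX (by simp)
  | @insert a s _ ih =>
      rcases s.eq_empty_or_nonempty with rfl | hs
      · simpa using Mem0.range a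
      · have : (⋂ e ∈ insert a s, G.rng e) = G.rng a ∩ ⋂ e ∈ s, G.rng e := by
          simp [Set.biInter_insert]
        rw [this]
        exact Mem0.inter (Mem0.range a) (ih hs)

lemma mem0_iUnion : ∀ (n : ℕ) (B : Fin n → Set G.V), (∀ i, G.Mem0 (B i)) → G.Mem0 (⋃ i, B i)
  | 0, B, _ => by simpa using Mem0.empty
  | n + 1, B, hB => by
      have : (⋃ i, B i) = B 0 ∪ ⋃ i : Fin n, B i.succ := by
        ext x; simp [Fin.exists_fin_succ]
      rw [this]
      exact Mem0.union (hB 0) (mem0_iUnion n _ fun i => hB i.succ)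

lemma repQ (A : Set G.V) (h : G.Mem0 A) :
    ∃ (n : ℕ) (X : Fin n → Finset G.E) (F : Set G.V), F.Finite ∧
      (∀ i, (X i).Nonempty) ∧ A = (⋃ i, ⋂ e ∈ X i, G.rng e) ∪ F := by
  classical
  induction h with
  | empty => exact ⟨0, fun i => i.elim0, ∅, Set.finite_empty, fun i => i.elim0, by simp⟩
  | singleton v => exact ⟨0, fun i => i.elim0, {v}, Set.finite_singleton v, fun i => i.elim0, by simp⟩
  | range e =>
      refine ⟨1, fun _ => {e}, ∅, Set.finite_empty, fun _ => ⟨e, by simp⟩, ?_⟩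
      simp only [Finset.mem_singleton, Set.biInter_eq_iInter, Set.iInter_iInter_eq_left,
        Set.union_empty]
      exact (Set.iUnion_const _).symm
  | union _ _ ihA ihB =>
      obtain ⟨n, X, F, hF, hX, rfl⟩ := ihA
      obtain ⟨m, Y, F', hF', hY, rfl⟩ := ihB
      refine ⟨n + m, fun i => Sum.elim X Y (finSumFinEquiv.symm i), F ∪ F',
        hF.union hF', ?_, ?_⟩
      · intro i
        cases hs : finSumFinEquiv.symm i with
        | inl j => simp only [hs, Sum.elim_inl]; exact hX j
        | inr j => simp only [hs, Sum.elim_inr]; exact hY j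
      · have : (⋃ i, ⋂ e ∈ Sum.elim X Y (finSumFinEquiv.symm i), G.rng e)
            = (⋃ s : Fin n ⊕ Fin m, ⋂ e ∈ Sum.elim X Y s, G.rng e) :=
          finSumFinEquiv.symm.surjective.iUnion_comp (fun s => ⋂ e ∈ Sum.elim X Y s, G.rng e)
        rw [this, Set.iUnion_sum]
        simp only [Sum.elim_inl, Sum.elim_inr]
        ext x; simp; tauto
  | inter hA0 hB0 ihA ihB =>
      obtain ⟨n, X, F, hF, hX, rfl⟩ := ihA
      obtain ⟨m, Y, F', hF', hY, rfl⟩ := ihB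
      set U := ⋃ i, ⋂ e ∈ X i, G.rng e with hU
      set V := ⋃ j, ⋂ e ∈ Y j, G.rng e with hV
      set W := ⋃ p : Fin n × Fin m, ⋂ e ∈ X p.1 ∪ Y p.2, G.rng e with hW
      have hWUV : W = U ∩ V := by
        ext x
        simp only [hW, hU, hV, Set.mem_iUnion, Set.mem_inter_iff, Set.mem_iInter,
          Finset.mem_union, Prod.exists]
        constructor
        · rintro ⟨i, j, h⟩
          exact ⟨⟨i, fun e he => h e (Or.inl he)⟩, ⟨j, fun e he => h e (Or.inr he)⟩⟩
        · rintro ⟨⟨i, hi⟩, ⟨j, hj⟩⟩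
          exact ⟨i, j, fun e he => he.elim (hi e) (hj e)⟩
      refine ⟨n * m, fun i => X (finProdFinEquiv.symm i).1 ∪ Y (finProdFinEquiv.symm i).2,
        ((U ∪ F) ∩ (V ∪ F')) \ W, ?_, ?_, ?_⟩
      · refine (hF.union hF').subset ?_
        intro x hx
        have h1 := hx.1.1
        have h2 := hx.1.2
        have h3 := hx.2
        rw [hWUV] at h3
        rcases h1 with h1 | h1
        · rcases h2 with h2 | h2
          · exact absurd ⟨h1, h2⟩ h3
          · exact Or.inr h2
        · exact Or.inl h1
      · intro i
        exact Finset.Nonempty.mono Finset.subset_union_left (hX _)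
      · have hre : (⋃ i, ⋂ e ∈ X (finProdFinEquiv.symm i).1 ∪ Y (finProdFinEquiv.symm i).2, G.rng e) = W := by
          rw [hW]
          exact finProdFinEquiv.symm.surjective.iUnion_comp (fun p => ⋂ e ∈ X p.1 ∪ Y p.2, G.rng e)
        rw [hre]
        have hsub : W ⊆ (U ∪ F) ∩ (V ∪ F') := by
          rw [hWUV]
          exact Set.inter_subset_inter (Set.subset_union_left) (Set.subset_union_left)
        rw [Set.union_diff_cancel' (le_refl _) hsub]

end Ultragraph


/-- description of `𝒢⁰` (Lemma 2.12 of Tomforde). -/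
theorem statement0 (G : Ultragraph) (A : Set G.V) :
    G.Mem0 A ↔ ∃ (n : ℕ) (X : Fin n → Finset G.E) (F : Finset G.V),
      (∀ i, (X i).Nonempty) ∧
      Disjoint (F : Set G.V) (⋃ i, ⋂ e ∈ X i, G.rng e) ∧
      A = (⋃ i, ⋂ e ∈ X i, G.rng e) ∪ (F : Set G.V) := by
  classical
  constructor
  · intro h
    obtain ⟨n, X, F, hF, hX, rfl⟩ := G.repQ _ h
    set U := ⋃ i, ⋂ e ∈ X i, G.rng e with hU
    refine ⟨n, X, (hF.diff (t := U)).toFinset, hX, ?_, ?_⟩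
    · rw [Set.Finite.coe_toFinset]
      exact Set.disjoint_sdiff_left
    · rw [Set.Finite.coe_toFinset, Set.union_diff_self]
  · rintro ⟨n, X, F, hX, -, rfl⟩
    exact Ultragraph.Mem0.union (G.mem0_iUnion n _ fun i => G.mem0_biInter _ (hX i))
      (G.mem0_finset F)
end

section
/- Let 𝒢 be an ultragraph and K a field. The Leavitt path algebra L_K(𝒢) is unital if and only if G⁰ ∈ 𝒢⁰; in this case the identity element is p_{G⁰}. -/
set_option maxHeartbeats 1000000
set_option synthInstance.maxHeartbeats 400000

open scoped BigOperators

namespace Ultragraph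

variable (G : Ultragraph)

/-- A finite path (possibly empty) ending at a singular vertex `v`. -/
def OkPair (l : List G.E) (v : G.V) : Prop :=
  G.IsSingular v ∧ G.IsPathList l ∧ ∀ h : l ≠ [], v ∈ G.rng (l.getLast h)

/-- Basis for the path-space representation: finite paths ending at singular
vertices, together with infinite paths. -/
def PBasis : Type :=
  {p : List G.E × G.V // G.OkPair p.1 p.2} ⊕ {α : ℕ → G.E // G.IsInfinitePath α}

/-- Source vertex of a basis element. -/
def srcOf : G.PBasis → G.V
  | Sum.inl ⟨([], v), _⟩ => v
  | Sum.inl ⟨(e :: _, _), _⟩ => G.src e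
  | Sum.inr ⟨α, _⟩ => G.src (α 0)

lemma okPair_cons {e : G.E} : ∀ {b : {p : List G.E × G.V // G.OkPair p.1 p.2}},
    G.srcOf (Sum.inl b) ∈ G.rng e → G.OkPair (e :: b.1.1) b.1.2
  | ⟨([], v), hp⟩, h => by
      refine ⟨hp.1, ?_, fun _ => ?_⟩
      · exact List.isChain_singleton _
      · simpa using (show v ∈ G.rng e from h)
  | ⟨(f :: l, v), hp⟩, h => by
      refine ⟨hp.1, List.isChain_cons_cons.mpr ⟨h, hp.2.1⟩, fun _ => ?_⟩
      rw [List.getLast_cons (by simp)]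
      exact hp.2.2 (by simp)

/-- Prepending an edge to a basis element. -/
def consB (e : G.E) : ∀ b : G.PBasis, G.srcOf b ∈ G.rng e → G.PBasis
  | Sum.inl b, h => Sum.inl ⟨(e :: b.1.1, b.1.2), G.okPair_cons h⟩
  | Sum.inr ⟨α, hα⟩, h =>
      Sum.inr ⟨fun n => Nat.casesOn n e α, fun i => by
        cases i with
        | zero => exact h
        | succ n => exact hα n⟩

lemma srcOf_consB (e : G.E) : ∀ (b : G.PBasis) (h : G.srcOf b ∈ G.rng e),
    G.srcOf (G.consB e b h) = G.src e
  | Sum.inl ⟨(l, v), hp⟩, h => rfl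
  | Sum.inr ⟨α, hα⟩, h => rfl

lemma okPair_tail {e : G.E} {l : List G.E} {v : G.V} (hp : G.OkPair (e :: l) v) :
    G.OkPair l v := by
  refine ⟨hp.1, (List.isChain_cons.mp hp.2.1).2, fun h => ?_⟩
  have := hp.2.2 (by simp)
  rwa [List.getLast_cons h] at this


variable (K : Type) [Field K]

/-- The module of the path-space representation. -/
abbrev PMod := G.PBasis →₀ K

/-- Extend a basis-valued function to a linear endomorphism. -/
noncomputable def lop (f : G.PBasis → PMod G K) : Module.End K (PMod G K) :=
  Finsupp.lift (PMod G K) K G.PBasis f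

lemma lop_single (f : G.PBasis → PMod G K) (b : G.PBasis) (c : K) :
    lop G K f (Finsupp.single b c) = c • f b := by
  simp [lop, Finsupp.lift_apply, Finsupp.sum_single_index]

open Classical in
/-- Action of `p_A`. -/
noncomputable def Pop (A : Set G.V) : Module.End K (PMod G K) :=
  lop G K (fun b => if G.srcOf b ∈ A then Finsupp.single b 1 else 0)

open Classical in
/-- Action of `s_e`. -/
noncomputable def Sop (e : G.E) : Module.End K (PMod G K) :=
  lop G K (fun b => if h : G.srcOf b ∈ G.rng e then Finsupp.single (G.consB e b h) 1 else 0)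

open Classical in
/-- Beheading map underlying the action of `s*_e`. -/
noncomputable def beheadF (e : G.E) : G.PBasis → PMod G K
  | Sum.inl ⟨([], _), _⟩ => 0
  | Sum.inl ⟨(f :: l, v), hp⟩ =>
      if f = e then Finsupp.single (Sum.inl ⟨(l, v), G.okPair_tail hp⟩) 1 else 0
  | Sum.inr ⟨α, hα⟩ =>
      if α 0 = e then
        Finsupp.single (Sum.inr ⟨fun n => α (n + 1), fun i => hα (i + 1)⟩) 1
      else 0

/-- Action of `s*_e`. -/
noncomputable def Top (e : G.E) : Module.End K (PMod G K) :=
  lop G K (G.beheadF K e)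


open scoped Classical

lemma singular_not_regular {v : G.V} (hs : G.IsSingular v) (hr : G.IsRegular v) : False := by
  rcases hs with hs | hs
  · rw [IsSink] at hs
    exact (hr.1).ne_empty hs
  · exact hs hr.2

lemma Pop_single (A : Set G.V) (b : G.PBasis) (c : K) :
    Pop G K A (Finsupp.single b c) =
      if G.srcOf b ∈ A then Finsupp.single b c else 0 := by
  rw [Pop, lop_single]
  split_ifs <;> simp

lemma Sop_single (e : G.E) (b : G.PBasis) (c : K) :
    Sop G K e (Finsupp.single b c) =
      if h : G.srcOf b ∈ G.rng e then Finsupp.single (G.consB e b h) c else 0 := by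
  rw [Sop, lop_single]
  split_ifs <;> simp

lemma Top_single (e : G.E) (b : G.PBasis) (c : K) :
    Top G K e (Finsupp.single b c) = c • G.beheadF K e b := by
  rw [Top, lop_single]

lemma rel1 : Pop G K ∅ = 0 := by
  apply Finsupp.lhom_ext
  intro b c
  simp [Pop_single]

lemma rel2 (A B : Set G.V) : Pop G K A * Pop G K B = Pop G K (A ∩ B) := by
  apply Finsupp.lhom_ext
  intro b c
  simp only [Module.End.mul_apply, Pop_single]
  by_cases hB : G.srcOf b ∈ B <;> by_cases hA : G.srcOf b ∈ A <;>
    simp [hA, hB, Pop_single]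

lemma rel3 (A B : Set G.V) :
    Pop G K (A ∪ B) = Pop G K A + Pop G K B - Pop G K (A ∩ B) := by
  apply Finsupp.lhom_ext
  intro b c
  simp only [LinearMap.sub_apply, LinearMap.add_apply, Pop_single]
  by_cases hB : G.srcOf b ∈ B <;> by_cases hA : G.srcOf b ∈ A <;>
    simp [hA, hB]

lemma rel4 (e : G.E) : Pop G K {G.src e} * Sop G K e = Sop G K e := by
  apply Finsupp.lhom_ext
  intro b c
  simp only [Module.End.mul_apply, Sop_single]
  split_ifs with h
  · rw [Pop_single,
      if_pos (show G.srcOf (G.consB e b h) ∈ ({G.src e} : Set G.V) by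
        rw [srcOf_consB]; exact rfl)]
  · simp

lemma rel5 (e : G.E) : Sop G K e * Pop G K (G.rng e) = Sop G K e := by
  apply Finsupp.lhom_ext
  intro b c
  simp only [Module.End.mul_apply, Pop_single]
  by_cases h : G.srcOf b ∈ G.rng e
  · rw [if_pos h]
  · rw [if_neg h, map_zero, Sop_single, dif_neg h]

lemma Pop_rng_beheadF (e : G.E) (b : G.PBasis) :
    Pop G K (G.rng e) (G.beheadF K e b) = G.beheadF K e b := by
  rcases b with ⟨⟨l, v⟩, hp⟩ | ⟨α, hα⟩
  · rcases l with _ | ⟨f, l⟩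
    · simp [beheadF]
    · rw [beheadF]
      split_ifs with hfe
      · subst hfe
        erw [Pop_single, if_pos]
        rcases l with _ | ⟨g, l⟩
        · exact hp.2.2 (by simp)
        · exact (List.isChain_cons_cons.mp hp.2.1).1
      · simp
  · rw [beheadF]
    split_ifs with hfe
    · erw [Pop_single, if_pos]
      show G.src (α 1) ∈ G.rng e
      rw [← hfe]
      exact hα 0
    · simp

lemma rel6 (e : G.E) : Pop G K (G.rng e) * Top G K e = Top G K e := by
  apply Finsupp.lhom_ext
  intro b c
  simp only [Module.End.mul_apply, Top_single, map_smul, Pop_rng_beheadF]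

lemma beheadF_eq_zero_of_src (e : G.E) (b : G.PBasis) (h : G.srcOf b ≠ G.src e) :
    G.beheadF K e b = 0 := by
  rcases b with ⟨⟨l, v⟩, hp⟩ | ⟨α, hα⟩
  · rcases l with _ | ⟨f, l⟩
    · rfl
    · rw [beheadF, if_neg]
      intro hfe
      exact h (by rw [← hfe]; rfl)
  · rw [beheadF, if_neg]
    intro hfe
    exact h (by rw [← hfe]; rfl)

lemma rel7 (e : G.E) : Top G K e * Pop G K {G.src e} = Top G K e := by
  apply Finsupp.lhom_ext
  intro b c
  simp only [Module.End.mul_apply, Pop_single]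
  split_ifs with h
  · rfl
  · rw [map_zero, Top_single, beheadF_eq_zero_of_src G K e b h, smul_zero]

lemma beheadF_consB (e : G.E) (b : G.PBasis) (h : G.srcOf b ∈ G.rng e) :
    G.beheadF K e (G.consB e b h) = Finsupp.single b 1 := by
  rcases b with ⟨⟨l, v⟩, hp⟩ | ⟨α, hα⟩
  · rw [consB, beheadF, if_pos rfl]
  · exact
      if_pos (show (fun n => Nat.casesOn n e α : ℕ → G.E) 0 = e from rfl)

lemma rel8 (e : G.E) : Top G K e * Sop G K e = Pop G K (G.rng e) := by
  apply Finsupp.lhom_ext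
  intro b c
  simp only [Module.End.mul_apply, Sop_single, Pop_single]
  split_ifs with h
  · rw [Top_single, beheadF_consB]
    simp
  · simp

lemma beheadF_consB_ne {e f : G.E} (hef : e ≠ f) (b : G.PBasis)
    (h : G.srcOf b ∈ G.rng f) : G.beheadF K e (G.consB f b h) = 0 := by
  rcases b with ⟨⟨l, v⟩, hp⟩ | ⟨α, hα⟩
  · rw [consB, beheadF, if_neg (fun hh => hef hh.symm)]
  · refine if_neg ?_
    exact fun hh => hef hh.symm

lemma rel9 {e f : G.E} (hef : e ≠ f) : Top G K e * Sop G K f = 0 := by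
  apply Finsupp.lhom_ext
  intro b c
  simp only [Module.End.mul_apply, Sop_single]
  split_ifs with h
  · rw [Top_single, beheadF_consB_ne G K hef, smul_zero, LinearMap.zero_apply]
  · simp


lemma srcOf_tail {f : G.E} {l : List G.E} {w : G.V} (hp : G.OkPair (f :: l) w) :
    G.srcOf (Sum.inl ⟨(l, w), G.okPair_tail hp⟩) ∈ G.rng f := by
  rcases l with _ | ⟨g, l⟩
  · exact hp.2.2 (by simp)
  · exact (List.isChain_cons_cons.mp hp.2.1).1

lemma ck_sum (v : G.V) (h : G.IsRegular v) (b : G.PBasis) :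
    ∑ e ∈ h.2.toFinset, Sop G K e (G.beheadF K e b) =
      if G.srcOf b ∈ ({v} : Set G.V) then Finsupp.single b 1 else 0 := by
  have hmem : ∀ e : G.E, e ∈ h.2.toFinset ↔ G.src e = v := by
    intro e
    rw [Set.Finite.mem_toFinset]
    exact Iff.rfl
  rcases b with ⟨⟨l, w⟩, hp⟩ | ⟨α, hα⟩
  · rcases l with _ | ⟨f, l⟩
    · rw [if_neg]
      · refine Finset.sum_eq_zero fun e _ => by
          show Sop G K e (G.beheadF K e (Sum.inl ⟨([], w), hp⟩)) = 0
          rw [show G.beheadF K e (Sum.inl ⟨([], w), hp⟩) = 0 from rfl, map_zero]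
      · show ¬ w ∈ ({v} : Set G.V)
        intro hw
        rw [Set.mem_singleton_iff] at hw
        subst hw
        exact G.singular_not_regular hp.1 h
    · set b' : G.PBasis := Sum.inl ⟨(l, w), G.okPair_tail hp⟩ with hb'
      have hbehead : ∀ e : G.E, G.beheadF K e (Sum.inl ⟨(f :: l, w), hp⟩) =
          if f = e then Finsupp.single b' 1 else 0 := fun e => rfl
      have hterm : Sop G K f (G.beheadF K f (Sum.inl ⟨(f :: l, w), hp⟩)) =
          Finsupp.single (Sum.inl ⟨(f :: l, w), hp⟩) 1 := by
        rw [hbehead, if_pos rfl, Sop_single, dif_pos (G.srcOf_tail hp)]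
        rfl
      have hterm0 : ∀ e : G.E, e ≠ f →
          Sop G K e (G.beheadF K e (Sum.inl ⟨(f :: l, w), hp⟩)) = 0 := by
        intro e he
        rw [hbehead, if_neg (fun hh => he hh.symm), map_zero]
      by_cases hv : G.src f = v
      · rw [Finset.sum_eq_single_of_mem f ((hmem f).mpr hv)
          (fun e _ he => hterm0 e he), hterm, if_pos]
        rfl
        show G.src f ∈ ({v} : Set G.V)
        exact hv
      · rw [Finset.sum_eq_zero, if_neg]
        · show ¬ G.src f ∈ ({v} : Set G.V)
          exact hv
        · intro e he
          refine hterm0 e fun hef => hv ?_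
          rw [← hef]
          exact (hmem e).mp he
  · set b' : G.PBasis := Sum.inr ⟨fun n => α (n + 1), fun i => hα (i + 1)⟩ with hb'
    have hbehead : ∀ e : G.E, G.beheadF K e (Sum.inr ⟨α, hα⟩) =
        if α 0 = e then Finsupp.single b' 1 else 0 := fun e => rfl
    have hsrc' : G.srcOf b' ∈ G.rng (α 0) := hα 0
    have hterm : Sop G K (α 0) (G.beheadF K (α 0) (Sum.inr ⟨α, hα⟩)) =
        Finsupp.single (Sum.inr ⟨α, hα⟩ : G.PBasis) 1 := by
      rw [hbehead, if_pos rfl, Sop_single, dif_pos hsrc']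
      congr 1
      exact congrArg Sum.inr (Subtype.ext (funext fun n => by cases n <;> rfl))
    have hterm0 : ∀ e : G.E, e ≠ α 0 →
        Sop G K e (G.beheadF K e (Sum.inr ⟨α, hα⟩)) = 0 := by
      intro e he
      rw [hbehead, if_neg (fun hh => he hh.symm), map_zero]
    by_cases hv : G.src (α 0) = v
    · rw [Finset.sum_eq_single_of_mem (α 0) ((hmem (α 0)).mpr hv)
        (fun e _ he => hterm0 e he), hterm, if_pos]
      rfl
      show G.src (α 0) ∈ ({v} : Set G.V)
      exact hv
    · rw [Finset.sum_eq_zero, if_neg]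
      · show ¬ G.src (α 0) ∈ ({v} : Set G.V)
        exact hv
      · intro e he
        refine hterm0 e fun hef => hv ?_
        rw [← hef]
        exact (hmem e).mp he

lemma rel10 (v : G.V) (h : G.IsRegular v) :
    Pop G K {v} = ∑ e ∈ h.2.toFinset, Sop G K e * Top G K e := by
  apply Finsupp.lhom_ext
  intro b c
  rw [LinearMap.sum_apply, Pop_single]
  have : ∀ e ∈ h.2.toFinset, (Sop G K e * Top G K e) (Finsupp.single b c) =
      c • Sop G K e (G.beheadF K e b) := by
    intro e _
    rw [Module.End.mul_apply, Top_single, map_smul]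
  rw [Finset.sum_congr rfl this, ← Finset.smul_sum, ck_sum G K v h b]
  split_ifs <;> simp


/-- Generators of the representation. -/
noncomputable def repGen : LGen G → Module.End K (PMod G K)
  | LGen.pr A => Pop G K A.1
  | LGen.ed e => Sop G K e
  | LGen.st e => Top G K e

/-- The representation on the free algebra. -/
noncomputable def repF : FreeAlgebra K (LGen G) →ₐ[K] Module.End K (PMod G K) :=
  FreeAlgebra.lift K (repGen G K)

lemma repF_genP (A : Set G.V) (hA : G.Mem0 A) :
    repF G K (genP K G A hA) = Pop G K A := by
  rw [genP, repF, FreeAlgebra.lift_ι_apply]; rfl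

lemma repF_genS (e : G.E) : repF G K (genS K G e) = Sop G K e := by
  rw [genS, repF, FreeAlgebra.lift_ι_apply]; rfl

lemma repF_genT (e : G.E) : repF G K (genT K G e) = Top G K e := by
  rw [genT, repF, FreeAlgebra.lift_ι_apply]; rfl

lemma repF_rel : ∀ ⦃x y : FreeAlgebra K (LGen G)⦄, LRel K G x y →
    repF G K x = repF G K y := by
  intro x y h
  induction h with
  | pEmpty => rw [repF_genP, map_zero, rel1]
  | pMul hA hB => rw [map_mul, repF_genP, repF_genP, repF_genP, rel2]
  | pUnion hA hB =>
      rw [map_sub, map_add, repF_genP, repF_genP, repF_genP, repF_genP, rel3]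
  | srcMul e => rw [map_mul, repF_genP, repF_genS, rel4]
  | mulRng e => rw [map_mul, repF_genP, repF_genS, rel5]
  | rngStar e => rw [map_mul, repF_genP, repF_genT, rel6]
  | starSrc e => rw [map_mul, repF_genP, repF_genT, rel7]
  | starMulSame e => rw [map_mul, repF_genP, repF_genS, repF_genT, rel8]
  | starMulDiff hne => rw [map_zero, map_mul, repF_genS, repF_genT, rel9 G K hne]
  | ck v h =>
      rw [repF_genP, map_sum, rel10 G K v h]
      exact Finset.sum_congr rfl fun e _ => by
        rw [map_mul, repF_genS, repF_genT]

/-- The representation on the unital envelope. -/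
noncomputable def repA : LPAEnv K G →ₐ[K] Module.End K (PMod G K) :=
  RingQuot.liftAlgHom K ⟨repF G K, fun x y h => repF_rel G K h⟩

lemma repA_lmk (x : FreeAlgebra K (LGen G)) :
    repA G K (lmk K G x) = repF G K x := by
  rw [lmk, repA, RingQuot.liftAlgHom_mkAlgHom_apply]

/-- Reachability from `v`. -/
def Reach (v w : G.V) : Prop :=
  w = v ∨ ∃ l : List G.E, ∃ h : l ≠ [], G.IsPathList l ∧
    G.src (l.head h) = v ∧ w ∈ G.rng (l.getLast h)

lemma reach_step {v w : G.V} (hw : G.Reach v w) {e : G.E} (he : G.src e = w) :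
    ∀ u ∈ G.rng e, G.Reach v u := by
  intro u hu
  rcases hw with rfl | ⟨l, hl, hpath, hhead, hlast⟩
  · exact Or.inr ⟨[e], by simp, List.isChain_singleton _, by simpa using he, by simpa using hu⟩
  · refine Or.inr ⟨l ++ [e], by simp, ?_, ?_, ?_⟩
    · refine List.IsChain.append hpath (List.isChain_singleton _) ?_
      intro x hx y hy
      rw [List.getLast?_eq_getLast (l := l) hl] at hx
      rw [List.head?_cons] at hy
      obtain rfl : l.getLast hl = x := by injection hx
      obtain rfl : e = y := by injection hy
      rw [he]
      exact hlast
    · rwa [List.head_append_of_ne_nil]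
    · rwa [List.getLast_append]

lemma exists_pbasis (v : G.V) : ∃ b : G.PBasis, G.srcOf b = v := by
  by_cases hsing : ∃ w : G.V, G.Reach v w ∧ G.IsSingular w
  · obtain ⟨w, hw, hws⟩ := hsing
    rcases hw with rfl | ⟨l, hl, hpath, hhead, hlast⟩
    · exact ⟨Sum.inl ⟨([], w), ⟨hws, List.isChain_nil, fun h => absurd rfl h⟩⟩, rfl⟩
    · refine ⟨Sum.inl ⟨(l, w), ⟨hws, hpath, fun _ => hlast⟩⟩, ?_⟩
      rcases l with _ | ⟨f, l⟩
      · exact absurd rfl hl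
      · exact hhead
  · push_neg at hsing
    have hreg : ∀ w : G.V, G.Reach v w → G.IsRegular w := by
      intro w hw
      have := hsing w hw
      rw [IsSingular, not_or, IsSink] at this
      exact ⟨Set.nonempty_iff_ne_empty.mpr this.1, Set.not_infinite.mp this.2⟩
    -- the type of "good" edges
    let T := {e : G.E // ∀ u ∈ G.rng e, G.Reach v u}
    have step : ∀ q : T, ∃ f : G.E, G.src f ∈ G.rng q.1 ∧ ∀ u ∈ G.rng f, G.Reach v u := by
      intro q
      obtain ⟨u, hu⟩ := G.rng_nonempty q.1
      have hru : G.Reach v u := q.2 u hu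
      obtain ⟨f, hf⟩ := (hreg u hru).1
      exact ⟨f, by rw [hf]; exact hu, G.reach_step hru hf⟩
    choose nextE hnsrc hnreach using step
    have hq0 : ∃ e : G.E, G.src e = v ∧ ∀ u ∈ G.rng e, G.Reach v u := by
      obtain ⟨e, he⟩ := (hreg v (Or.inl rfl)).1
      exact ⟨e, he, G.reach_step (Or.inl rfl) he⟩
    obtain ⟨e0, he0, he0r⟩ := hq0
    let nxt : T → T := fun q => ⟨nextE q, hnreach q⟩
    let f : ℕ → T := fun n => Nat.rec ⟨e0, he0r⟩ (fun _ q => nxt q) n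
    have hf : ∀ n, f (n + 1) = nxt (f n) := fun n => rfl
    have hchain : G.IsInfinitePath (fun n => (f n).1) := by
      intro i
      exact hnsrc (f i)
    exact ⟨Sum.inr ⟨fun n => (f n).1, hchain⟩, he0⟩

lemma Pop_singleton_ne_zero (v : G.V) : Pop G K {v} ≠ 0 := by
  obtain ⟨b, hb⟩ := G.exists_pbasis v
  intro h0
  have := congrArg (fun T : Module.End K (PMod G K) => T (Finsupp.single b 1)) h0
  simp only [Pop_single, LinearMap.zero_apply] at this
  rw [if_pos (show G.srcOf b ∈ ({v} : Set G.V) from hb)] at this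
  exact one_ne_zero (Finsupp.single_eq_zero.mp this)


lemma lmk_rel {x y : FreeAlgebra K (LGen G)} (h : LRel K G x y) :
    lmk K G x = lmk K G y :=
  RingQuot.mkAlgHom_rel K h

lemma lmk_genP_congr {A B : Set G.V} (h : A = B) (hA : G.Mem0 A) (hB : G.Mem0 B) :
    lmk K G (genP K G A hA) = lmk K G (genP K G B hB) := by
  subst h
  rfl

lemma lmk_genP_empty : lmk K G (genP K G ∅ Mem0.empty) = 0 := by
  rw [lmk_rel G K LRel.pEmpty, map_zero]

lemma absorb_left_mono {A B : Set G.V} (hA : G.Mem0 A) (hB : G.Mem0 B) (hAB : A ⊆ B)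
    {y : LPAEnv K G} (h : lmk K G (genP K G A hA) * y = y) :
    lmk K G (genP K G B hB) * y = y := by
  conv_lhs => rw [← h]
  rw [← mul_assoc, ← map_mul, lmk_rel G K (LRel.pMul hB hA),
    lmk_genP_congr G K (Set.inter_eq_right.mpr hAB) (hB.inter hA) hA, h]

lemma absorb_right_mono {A B : Set G.V} (hA : G.Mem0 A) (hB : G.Mem0 B) (hAB : A ⊆ B)
    {y : LPAEnv K G} (h : y * lmk K G (genP K G A hA) = y) :
    lmk K G (genP K G B hB) = lmk K G (genP K G B hB) →
    y * lmk K G (genP K G B hB) = y := by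
  intro _
  conv_lhs => rw [← h]
  rw [mul_assoc, ← map_mul, lmk_rel G K (LRel.pMul hA hB),
    lmk_genP_congr G K (Set.inter_eq_left.mpr hAB) (hA.inter hB) hA, h]

lemma exists_absorbing (y : LPAEnv K G) (hy : y ∈ LPAsub K G) :
    ∃ A : Set G.V, ∃ hA : G.Mem0 A,
      lmk K G (genP K G A hA) * y = y ∧ y * lmk K G (genP K G A hA) = y := by
  refine NonUnitalAlgebra.adjoin_induction
    (p := fun x _ => ∃ A : Set G.V, ∃ hA : G.Mem0 A,
      lmk K G (genP K G A hA) * x = x ∧ x * lmk K G (genP K G A hA) = x)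
    (fun x hx => ?_) (fun x z hx hz ihx ihz => ?_) ?_
    (fun x z hx hz ihx ihz => ?_) (fun r x hx ihx => ?_) hy
  · obtain ⟨g, rfl⟩ := hx
    cases g with
    | pr A =>
        show ∃ B : Set G.V, ∃ hB : G.Mem0 B,
          lmk K G (genP K G B hB) * lmk K G (genP K G A.1 A.2) = lmk K G (genP K G A.1 A.2) ∧
          lmk K G (genP K G A.1 A.2) * lmk K G (genP K G B hB) = lmk K G (genP K G A.1 A.2)
        refine ⟨A.1, A.2, ?_, ?_⟩ <;>
          rw [← map_mul, lmk_rel G K (LRel.pMul A.2 A.2),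
            lmk_genP_congr G K (Set.inter_self A.1) (A.2.inter A.2) A.2]
    | ed e =>
        show ∃ A : Set G.V, ∃ hA : G.Mem0 A,
          lmk K G (genP K G A hA) * lmk K G (genS K G e) = lmk K G (genS K G e) ∧
          lmk K G (genS K G e) * lmk K G (genP K G A hA) = lmk K G (genS K G e)
        refine ⟨{G.src e} ∪ G.rng e, (Mem0.singleton _).union (Mem0.range e), ?_, ?_⟩
        · exact absorb_left_mono G K (Mem0.singleton (G.src e)) _ Set.subset_union_left
            (by rw [← map_mul, lmk_rel G K (LRel.srcMul e)])
        · exact absorb_right_mono G K (Mem0.range e) _ Set.subset_union_right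
            (by rw [← map_mul, lmk_rel G K (LRel.mulRng e)]) rfl
    | st e =>
        show ∃ A : Set G.V, ∃ hA : G.Mem0 A,
          lmk K G (genP K G A hA) * lmk K G (genT K G e) = lmk K G (genT K G e) ∧
          lmk K G (genT K G e) * lmk K G (genP K G A hA) = lmk K G (genT K G e)
        refine ⟨{G.src e} ∪ G.rng e, (Mem0.singleton _).union (Mem0.range e), ?_, ?_⟩
        · exact absorb_left_mono G K (Mem0.range e) _ Set.subset_union_right
            (by rw [← map_mul, lmk_rel G K (LRel.rngStar e)])
        · exact absorb_right_mono G K (Mem0.singleton (G.src e)) _ Set.subset_union_left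
            (by rw [← map_mul, lmk_rel G K (LRel.starSrc e)]) rfl
  · obtain ⟨A, hA, hxl, hxr⟩ := ihx
    obtain ⟨B, hB, hzl, hzr⟩ := ihz
    refine ⟨A ∪ B, hA.union hB, ?_, ?_⟩
    · rw [mul_add, absorb_left_mono G K hA (hA.union hB) Set.subset_union_left hxl,
        absorb_left_mono G K hB (hA.union hB) Set.subset_union_right hzl]
    · rw [add_mul, absorb_right_mono G K hA (hA.union hB) Set.subset_union_left hxr rfl,
        absorb_right_mono G K hB (hA.union hB) Set.subset_union_right hzr rfl]
  · exact ⟨∅, Mem0.empty, by rw [mul_zero], by rw [zero_mul]⟩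
  · obtain ⟨A, hA, hxl, hxr⟩ := ihx
    obtain ⟨B, hB, hzl, hzr⟩ := ihz
    refine ⟨A ∪ B, hA.union hB, ?_, ?_⟩
    · rw [← mul_assoc, absorb_left_mono G K hA (hA.union hB) Set.subset_union_left hxl]
    · rw [mul_assoc, absorb_right_mono G K hB (hA.union hB) Set.subset_union_right hzr rfl]
  · obtain ⟨A, hA, hxl, hxr⟩ := ihx
    exact ⟨A, hA, by rw [mul_smul_comm, hxl], by rw [smul_mul_assoc, hxr]⟩

end Ultragraph

/-- `L_K(𝒢)` is unital iff `G⁰ ∈ 𝒢⁰`, with identity `p_{G⁰}`. -/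
theorem statement2 (K : Type) [Field K] (G : Ultragraph) :
    ((∃ u : Ultragraph.LPA K G, ∀ x : Ultragraph.LPA K G, u * x = x ∧ x * u = x) ↔
      G.Mem0 Set.univ) ∧
    ∀ h : G.Mem0 Set.univ, ∀ x : Ultragraph.LPA K G,
      Ultragraph.p K G Set.univ h * x = x ∧ x * Ultragraph.p K G Set.univ h = x := by
  classical
  have hid : ∀ h : G.Mem0 Set.univ, ∀ x : Ultragraph.LPA K G,
      Ultragraph.p K G Set.univ h * x = x ∧ x * Ultragraph.p K G Set.univ h = x := by
    intro h x
    obtain ⟨A, hA, hl, hr⟩ := Ultragraph.exists_absorbing G K x.1 x.2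
    constructor
    · exact Subtype.ext
        (Ultragraph.absorb_left_mono G K hA h (Set.subset_univ A) hl)
    · exact Subtype.ext
        (Ultragraph.absorb_right_mono G K hA h (Set.subset_univ A) hr rfl)
  refine ⟨⟨?_, fun h => ⟨Ultragraph.p K G Set.univ h, hid h⟩⟩, hid⟩
  rintro ⟨u, hu⟩
  obtain ⟨A, hA, hl, hr⟩ := Ultragraph.exists_absorbing G K u.1 u.2
  have hAuniv : A = Set.univ := by
    rw [Set.eq_univ_iff_forall]
    intro v
    by_contra hv
    set hsv := Ultragraph.Mem0.singleton (G := G) v with hsvdef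
    have hx : u * Ultragraph.p K G {v} hsv = Ultragraph.p K G {v} hsv := (hu _).1
    have hx' : (u : Ultragraph.LPAEnv K G) *
        Ultragraph.lmk K G (Ultragraph.genP K G {v} hsv) =
        Ultragraph.lmk K G (Ultragraph.genP K G {v} hsv) := congrArg Subtype.val hx
    have h2 : (u : Ultragraph.LPAEnv K G) *
        Ultragraph.lmk K G (Ultragraph.genP K G {v} hsv) = 0 := by
      conv_lhs => rw [← hr]
      rw [mul_assoc, ← map_mul, Ultragraph.lmk_rel G K (Ultragraph.LRel.pMul hA hsv),
        Ultragraph.lmk_genP_congr G K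
          (by rwa [Set.inter_singleton_eq_empty]) (hA.inter hsv) Ultragraph.Mem0.empty,
        Ultragraph.lmk_genP_empty, mul_zero]
    have h3 : Ultragraph.lmk K G (Ultragraph.genP K G {v} hsv) = 0 := hx'.symm.trans h2
    have h4 := congrArg (Ultragraph.repA G K) h3
    rw [map_zero, Ultragraph.repA_lmk, Ultragraph.repF_genP] at h4
    exact Ultragraph.Pop_singleton_ne_zero G K v h4
  exact hAuniv ▸ hA
end

section
/- Let 𝒢 be an ultragraph and K a field. Then L_K(𝒢) is generated as a K-algebra by the set {s_e, s*_e : e ∈ 𝒢¹} ∪ {p_v : v ∈ Sing(𝒢)}, where Sing(𝒢) is the set of singular vertices (sinks and infinite emitters). -/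
set_option maxHeartbeats 1000000
set_option synthInstance.maxHeartbeats 400000

open scoped BigOperators

/-- `L_K(𝒢)` is generated by `{s_e, s*_e} ∪ {p_v : v singular}`. -/
theorem statement3 (K : Type) [Field K] (G : Ultragraph) :
    NonUnitalAlgebra.adjoin K
      ({x : Ultragraph.LPA K G | ∃ e : G.E,
          x = Ultragraph.se K G e ∨ x = Ultragraph.st K G e} ∪
       {x : Ultragraph.LPA K G | ∃ v : G.V, G.IsSingular v ∧
          x = Ultragraph.p K G {v} (Ultragraph.Mem0.singleton v)}) = ⊤ := by
  classical
  set S := NonUnitalAlgebra.adjoin K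
      ({x : Ultragraph.LPA K G | ∃ e : G.E,
          x = Ultragraph.se K G e ∨ x = Ultragraph.st K G e} ∪
       {x : Ultragraph.LPA K G | ∃ v : G.V, G.IsSingular v ∧
          x = Ultragraph.p K G {v} (Ultragraph.Mem0.singleton v)}) with hS
  have hse : ∀ e : G.E, Ultragraph.se K G e ∈ S := fun e =>
    NonUnitalAlgebra.subset_adjoin K (Or.inl ⟨e, Or.inl rfl⟩)
  have hst : ∀ e : G.E, Ultragraph.st K G e ∈ S := fun e =>
    NonUnitalAlgebra.subset_adjoin K (Or.inl ⟨e, Or.inr rfl⟩)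
  -- the relations hold in the quotient
  have hrel : ∀ {a b : FreeAlgebra K (Ultragraph.LGen G)},
      Ultragraph.LRel K G a b → Ultragraph.lmk K G a = Ultragraph.lmk K G b :=
    fun h => RingQuot.mkAlgHom_rel K h
  -- all projections `p_A` lie in `S`
  have hp : ∀ (A : Set G.V) (h : G.Mem0 A), Ultragraph.p K G A h ∈ S := by
    intro A h
    induction h with
    | empty =>
        have : Ultragraph.p K G ∅ Ultragraph.Mem0.empty = 0 := by
          apply Subtype.ext
          have := hrel (Ultragraph.LRel.pEmpty (K := K) (G := G))
          simpa [Ultragraph.p] using this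
        rw [this]; exact zero_mem S
    | singleton v =>
        by_cases hs : G.IsSingular v
        · exact NonUnitalAlgebra.subset_adjoin K (Or.inr ⟨v, hs, rfl⟩)
        · have hreg : G.IsRegular v := by
            rw [Ultragraph.IsSingular, not_or] at hs
            exact ⟨Set.nonempty_iff_ne_empty.mpr hs.1,
              Set.not_infinite.mp hs.2⟩
          have heq : Ultragraph.p K G {v} (Ultragraph.Mem0.singleton v) =
              ∑ e ∈ hreg.2.toFinset,
                Ultragraph.se K G e * Ultragraph.st K G e := by
            apply Subtype.ext
            have h1 := hrel (Ultragraph.LRel.ck (K := K) (G := G) v hreg)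
            have h2 : ((∑ e ∈ hreg.2.toFinset,
                Ultragraph.se K G e * Ultragraph.st K G e :
                  Ultragraph.LPA K G) : Ultragraph.LPAEnv K G)
                = ∑ e ∈ hreg.2.toFinset,
                    ((Ultragraph.se K G e * Ultragraph.st K G e :
                      Ultragraph.LPA K G) : Ultragraph.LPAEnv K G) := by
              exact AddSubmonoidClass.coe_finset_sum _ _
            rw [h2]
            simpa [Ultragraph.p, Ultragraph.se, Ultragraph.st, map_sum]
              using h1
          rw [heq]
          exact sum_mem (fun e _ => mul_mem (hse e) (hst e))
    | range e =>
        have heq : Ultragraph.p K G (G.rng e) (Ultragraph.Mem0.range e) =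
            Ultragraph.st K G e * Ultragraph.se K G e := by
          apply Subtype.ext
          have := hrel (Ultragraph.LRel.starMulSame (K := K) (G := G) e)
          simpa [Ultragraph.p, Ultragraph.se, Ultragraph.st] using this.symm
        rw [heq]; exact mul_mem (hst e) (hse e)
    | @union A B hA hB ihA ihB =>
        have hinter : Ultragraph.p K G (A ∩ B) (hA.inter hB) =
            Ultragraph.p K G A hA * Ultragraph.p K G B hB := by
          apply Subtype.ext
          have := hrel (Ultragraph.LRel.pMul (K := K) (G := G) hA hB)
          simpa [Ultragraph.p] using this.symm
        have heq : Ultragraph.p K G (A ∪ B) (hA.union hB) =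
            Ultragraph.p K G A hA + Ultragraph.p K G B hB -
              Ultragraph.p K G A hA * Ultragraph.p K G B hB := by
          apply Subtype.ext
          have h1 := hrel (Ultragraph.LRel.pUnion (K := K) (G := G) hA hB)
          rw [← hinter]
          simpa [Ultragraph.p] using h1
        have heq2 : Ultragraph.p K G (A ∪ B) (hA.union hB) =
            Ultragraph.p K G A hA + Ultragraph.p K G B hB +
              (-1 : K) • (Ultragraph.p K G A hA * Ultragraph.p K G B hB) :=
          heq.trans ((sub_eq_add_neg _ _).trans
            (congrArg (fun z => Ultragraph.p K G A hA + Ultragraph.p K G B hB + z)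
              (neg_one_smul K _).symm))
        rw [heq2]
        exact add_mem (add_mem ihA ihB)
          (SMulMemClass.smul_mem (-1 : K) (mul_mem ihA ihB))
    | @inter A B hA hB ihA ihB =>
        have heq : Ultragraph.p K G (A ∩ B) (hA.inter hB) =
            Ultragraph.p K G A hA * Ultragraph.p K G B hB := by
          apply Subtype.ext
          have := hrel (Ultragraph.LRel.pMul (K := K) (G := G) hA hB)
          simpa [Ultragraph.p] using this.symm
        rw [heq]; exact mul_mem ihA ihB
  -- now every element of the LPA lies in S
  rw [eq_top_iff]
  rintro ⟨y, hy⟩ -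
  have key : y ∈ S.map (NonUnitalSubalgebraClass.subtype
      (Ultragraph.LPAsub K G)) := by
    refine NonUnitalAlgebra.adjoin_le ?_ hy
    rintro x ⟨g, rfl⟩
    cases g with
    | pr A =>
        exact ⟨Ultragraph.p K G A.1 A.2, hp A.1 A.2, rfl⟩
    | ed e => exact ⟨Ultragraph.se K G e, hse e, rfl⟩
    | st e => exact ⟨Ultragraph.st K G e, hst e, rfl⟩
  obtain ⟨z, hz, hzy⟩ := key
  have : (⟨y, hy⟩ : Ultragraph.LPA K G) = z := Subtype.ext hzy.symm
  rw [this]; exact hz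
end

section
/- An ultragraph 𝒢 is acyclic if and only if for every non-empty finite subset F of 𝒢¹ ∪ Sing(𝒢), the associated finite graph G_F is acyclic. -/
set_option maxHeartbeats 1000000
set_option synthInstance.maxHeartbeats 400000

open scoped BigOperators

/-- A finite directed graph (source/range form). -/
structure DirGraph where
  V : Type
  E : Type
  src : E → V
  rng : E → V

/-- A cycle in a directed graph. -/
def DirGraph.IsCycle (H : DirGraph) (l : List H.E) : Prop :=
  ∃ h : l ≠ [], l.Chain' (fun e f => H.rng e = H.src f) ∧
    H.rng (l.getLast h) = H.src (l.head h)

/-- Acyclicity of a directed graph. -/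
def DirGraph.Acyclic (H : DirGraph) : Prop := ∀ l : List H.E, ¬ H.IsCycle l

namespace Ultragraph

variable (G : Ultragraph) (F0 : Finset G.V) (F1 : Finset G.E)

/-- `r(ω)` for `ω` corresponding to the nonempty subset `S ⊆ F¹`. -/
def rOmega (S : Finset G.E) : Set G.V :=
  (⋂ e ∈ S, G.rng e) \ (⋃ e ∈ (F1 : Set G.E) \ (S : Set G.E), G.rng e)

/-- `R(ω) := r(ω) \ F⁰`. -/
def ROmega (S : Finset G.E) : Set G.V := G.rOmega F1 S \ (F0 : Set G.V)

/-- `ω ∈ Γ₀`: `R(ω)` is a finite set of vertices `v` with `∅ ≠ s⁻¹(v) ⊆ F¹`. -/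
def InGamma0 (S : Finset G.E) : Prop :=
  (G.ROmega F0 F1 S).Finite ∧
    ∀ v ∈ G.ROmega F0 F1 S, (G.emitted v).Nonempty ∧ G.emitted v ⊆ (F1 : Set G.E)

/-- `ω ∈ Γ_F`: `R(ω) ≠ ∅` and `ω ∉ Γ₀`. -/
def InGammaF (S : Finset G.E) : Prop :=
  S ⊆ F1 ∧ S.Nonempty ∧ (G.ROmega F0 F1 S).Nonempty ∧ ¬ G.InGamma0 F0 F1 S

/-- The finite graph `G_F` associated to `F = F⁰ ∪ F¹`. -/
def finGraph : DirGraph where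
  V := ({v : G.V // v ∈ F0} ⊕ {e : G.E // e ∈ F1}) ⊕
        {S : Finset G.E // G.InGammaF F0 F1 S}
  E := ({q : {e : G.E // e ∈ F1} × {f : G.E // f ∈ F1} // G.src q.2.1 ∈ G.rng q.1.1} ⊕
        {q : {e : G.E // e ∈ F1} × {v : G.V // v ∈ F0} // q.2.1 ∈ G.rng q.1.1}) ⊕
        {q : {e : G.E // e ∈ F1} × {S : Finset G.E // G.InGammaF F0 F1 S} //
          q.1.1 ∈ q.2.1}
  src := fun x => match x with
    | Sum.inl (Sum.inl q) => Sum.inl (Sum.inr q.1.1)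
    | Sum.inl (Sum.inr q) => Sum.inl (Sum.inr q.1.1)
    | Sum.inr q => Sum.inl (Sum.inr q.1.1)
  rng := fun x => match x with
    | Sum.inl (Sum.inl q) => Sum.inl (Sum.inr q.1.2)
    | Sum.inl (Sum.inr q) => Sum.inl (Sum.inl q.1.2)
    | Sum.inr q => Sum.inr q.1.2

end Ultragraph

namespace Statement4Aux

variable (G : Ultragraph) (F0 : Finset G.V) (F1 : Finset G.E)

/-- Project an edge of `G_F` to its underlying ultragraph edge (the source). -/
def projE : (G.finGraph F0 F1).E → G.E
  | Sum.inl (Sum.inl q) => q.1.1.1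
  | Sum.inl (Sum.inr q) => q.1.1.1
  | Sum.inr q => q.1.1.1

lemma key {x y : (G.finGraph F0 F1).E}
    (h : (G.finGraph F0 F1).rng x = (G.finGraph F0 F1).src y) :
    G.src (projE G F0 F1 y) ∈ G.rng (projE G F0 F1 x) := by
  rcases x with ((q | q) | q) <;> rcases y with ((p | p) | p) <;>
    simp only [Ultragraph.finGraph, projE] at h ⊢ <;>
    first
      | (obtain h' : q.1.2 = p.1.1 := by
          simpa using h
         rw [← h']
         exact q.2)
      | simp at h

end Statement4Aux

/-- `𝒢` is acyclic iff `G_F` is acyclic for every nonempty finite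
`F ⊆ 𝒢¹ ∪ Sing(𝒢)`. -/
theorem statement4 (G : Ultragraph) :
    G.Acyclic ↔ ∀ (F0 : Finset G.V) (F1 : Finset G.E),
      (∀ v ∈ F0, G.IsSingular v) → (F0.Nonempty ∨ F1.Nonempty) →
      (G.finGraph F0 F1).Acyclic := by
  constructor
  · -- G acyclic → each G_F acyclic
    intro hG F0 F1 _ _ L hL
    obtain ⟨hne, hchain, hclose⟩ := hL
    apply hG (L.map (Statement4Aux.projE G F0 F1))
    refine ⟨by simpa using hne, ?_, ?_⟩
    · unfold Ultragraph.IsPathList List.Chain'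
      rw [List.isChain_map]
      exact List.IsChain.imp (fun a b hab => Statement4Aux.key G F0 F1 hab) hchain
    · have h1 : (L.map (Statement4Aux.projE G F0 F1)).head (by simpa using hne)
          = Statement4Aux.projE G F0 F1 (L.head hne) := List.head_map _
      have h2 : (L.map (Statement4Aux.projE G F0 F1)).getLast (by simpa using hne)
          = Statement4Aux.projE G F0 F1 (L.getLast hne) := List.getLast_map _
      rw [h1, h2]
      exact Statement4Aux.key G F0 F1 hclose
  · -- each G_F acyclic → G acyclic
    intro h l hl
    classical
    obtain ⟨hne, hchain, hclose⟩ := hl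
    have hn : 0 < l.length := List.length_pos_iff.mpr hne
    set H := G.finGraph (∅ : Finset G.V) l.toFinset with hH
    have mem : ∀ i : Fin l.length, l.get i ∈ l.toFinset := fun i => by
      rw [List.mem_toFinset]; exact List.get_mem l i
    have hhead : l.head hne = l.get ⟨0, hn⟩ := by
      rcases l with _ | ⟨a, t⟩
      · exact absurd rfl hne
      · rfl
    have hlast : l.getLast hne = l.get ⟨l.length - 1, by omega⟩ :=
      List.getLast_eq_getElem hne
    have hstep : ∀ i : Fin l.length,
        G.src (l.get ⟨((i : ℕ) + 1) % l.length, Nat.mod_lt _ hn⟩) ∈ G.rng (l.get i) := by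
      intro i
      by_cases hlt : (i : ℕ) + 1 < l.length
      · have e1 : (⟨((i : ℕ) + 1) % l.length, Nat.mod_lt _ hn⟩ : Fin l.length)
            = ⟨(i : ℕ) + 1, hlt⟩ := Fin.ext (Nat.mod_eq_of_lt hlt)
        rw [e1]
        exact List.isChain_iff_getElem.mp hchain (i : ℕ) (by omega)
      · have heq : (i : ℕ) + 1 = l.length := by have := i.isLt; omega
        have e1 : (⟨((i : ℕ) + 1) % l.length, Nat.mod_lt _ hn⟩ : Fin l.length)
            = ⟨0, hn⟩ := Fin.ext (by rw [heq]; exact Nat.mod_self _)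
        have e2 : i = ⟨l.length - 1, by omega⟩ := Fin.ext (by
          show (i : ℕ) = l.length - 1
          omega)
        rw [e1, e2]
        convert hclose using 2
        · exact hlast.symm
        · exact hhead.symm
    let g : Fin l.length → H.E := fun i =>
      Sum.inl (Sum.inl ⟨(⟨l.get i, mem i⟩,
        ⟨l.get ⟨((i : ℕ) + 1) % l.length, Nat.mod_lt _ hn⟩,
          mem _⟩), hstep i⟩)
    have hsrc : ∀ i, H.src (g i) = Sum.inl (Sum.inr ⟨l.get i, mem i⟩) := fun i => rfl
    have hrng : ∀ i, H.rng (g i) =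
        Sum.inl (Sum.inr ⟨l.get ⟨((i : ℕ) + 1) % l.length, Nat.mod_lt _ hn⟩, mem _⟩) :=
      fun i => rfl
    have hvx : ∀ (a b : Fin l.length), (a : ℕ) = (b : ℕ) →
        (Sum.inl (Sum.inr ⟨l.get a, mem a⟩) : H.V) = Sum.inl (Sum.inr ⟨l.get b, mem b⟩) := by
      intro a b hab
      have : a = b := Fin.ext hab
      subst this; rfl
    set L : List H.E := (List.finRange l.length).map g with hLdef
    have hLlen : L.length = l.length := by simp [hLdef]
    have hLne : L ≠ [] := by
      intro hh
      rw [hh] at hLlen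
      simp at hLlen
      omega
    have hLget : ∀ (i : ℕ) (hi : i < L.length), L.get ⟨i, hi⟩ = g ⟨i, hLlen ▸ hi⟩ := by
      intro i hi
      simp [hLdef]
    refine absurd ?_ (h ∅ l.toFinset (by simp) (Or.inr (by
      rcases l with _ | ⟨a, t⟩
      · exact absurd rfl hne
      · exact ⟨a, by simp⟩)) L)
    refine ⟨hLne, ?_, ?_⟩
    · unfold List.Chain'
      rw [List.isChain_iff_getElem]
      intro i hi
      show H.rng (L.get ⟨i, by omega⟩) = H.src (L.get ⟨i + 1, hi⟩)
      rw [hLget i (by omega), hLget (i + 1) (by omega)]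
      rw [hrng, hsrc]
      apply hvx
      show (i + 1) % l.length = i + 1
      exact Nat.mod_eq_of_lt (by omega)
    · have hlastL : L.getLast hLne = L.get ⟨L.length - 1, by omega⟩ :=
        List.getLast_eq_getElem hLne
      have hheadL : L.head hLne = L.get ⟨0, by omega⟩ :=
        List.head_eq_getElem_zero hLne
      rw [hlastL, hheadL, hLget, hLget, hrng, hsrc]
      apply hvx
      show ((L.length - 1) + 1) % l.length = 0
      have e3 : (L.length - 1) + 1 = l.length := by omega
      rw [e3]
      exact Nat.mod_self _
end

section
/- Let 𝒢 be an ultragraph and K a field. If the Leavitt path algebra L_K(𝒢) is von Neumann regular, then 𝒢 is acyclic (has no cycles). -/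
set_option maxHeartbeats 1000000
set_option synthInstance.maxHeartbeats 400000

open scoped BigOperators

/-! ### Auxiliary development for Statement 5 -/

namespace VNR

open Ultragraph

variable (K : Type) [Field K] (G : Ultragraph)

/-- Degree of a generator. -/
def deg : LGen G → ℤ
  | LGen.pr _ => 0
  | LGen.ed _ => 1
  | LGen.st _ => -1

/-- The grading coaction on the free algebra. -/
noncomputable def phiFree : FreeAlgebra K (LGen G) →ₐ[K] AddMonoidAlgebra (LPAEnv K G) ℤ :=
  FreeAlgebra.lift K fun g =>
    AddMonoidAlgebra.single (deg G g) (lmk K G (FreeAlgebra.ι K g))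

theorem phiFree_genP (A : Set G.V) (h : G.Mem0 A) :
    phiFree K G (genP K G A h) = AddMonoidAlgebra.single 0 (lmk K G (genP K G A h)) := by
  simp [phiFree, genP, FreeAlgebra.lift_ι_apply, deg]

theorem phiFree_genS (e : G.E) :
    phiFree K G (genS K G e) = AddMonoidAlgebra.single 1 (lmk K G (genS K G e)) := by
  simp [phiFree, genS, FreeAlgebra.lift_ι_apply, deg]

theorem phiFree_genT (e : G.E) :
    phiFree K G (genT K G e) = AddMonoidAlgebra.single (-1) (lmk K G (genT K G e)) := by
  simp [phiFree, genT, FreeAlgebra.lift_ι_apply, deg]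

theorem lmk_rel {a b : FreeAlgebra K (LGen G)} (h : LRel K G a b) :
    lmk K G a = lmk K G b := by
  simpa [Ultragraph.lmk] using RingQuot.mkAlgHom_rel K h

theorem phiFree_rel {a b : FreeAlgebra K (LGen G)} (h : LRel K G a b) :
    phiFree K G a = phiFree K G b := by
  induction h with
  | pEmpty =>
      have h0 := lmk_rel K G (LRel.pEmpty (K := K) (G := G))
      simp only [map_zero] at h0
      simp [phiFree_genP, h0]
  | @pMul A B hA hB =>
      have h0 := lmk_rel K G (LRel.pMul (K := K) (G := G) hA hB)
      rw [map_mul, phiFree_genP, phiFree_genP, phiFree_genP,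
        AddMonoidAlgebra.single_mul_single, ← map_mul, h0]
      try norm_num
  | @pUnion A B hA hB =>
      have h0 := lmk_rel K G (LRel.pUnion (K := K) (G := G) hA hB)
      rw [map_sub, map_add] at h0
      rw [map_sub, map_add, phiFree_genP, phiFree_genP, phiFree_genP, phiFree_genP, h0]
      rw [← AddMonoidAlgebra.single_add, ← AddMonoidAlgebra.single_sub]
  | srcMul e =>
      have h0 := lmk_rel K G (LRel.srcMul (K := K) (G := G) e)
      rw [map_mul, phiFree_genP, phiFree_genS,
        AddMonoidAlgebra.single_mul_single, ← map_mul, h0]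
      try norm_num
  | mulRng e =>
      have h0 := lmk_rel K G (LRel.mulRng (K := K) (G := G) e)
      rw [map_mul, phiFree_genS, phiFree_genP,
        AddMonoidAlgebra.single_mul_single, ← map_mul, h0]
      try norm_num
  | rngStar e =>
      have h0 := lmk_rel K G (LRel.rngStar (K := K) (G := G) e)
      rw [map_mul, phiFree_genP, phiFree_genT,
        AddMonoidAlgebra.single_mul_single, ← map_mul, h0]
      try norm_num
  | starSrc e =>
      have h0 := lmk_rel K G (LRel.starSrc (K := K) (G := G) e)
      rw [map_mul, phiFree_genT, phiFree_genP,
        AddMonoidAlgebra.single_mul_single, ← map_mul, h0]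
      try norm_num
  | starMulSame e =>
      have h0 := lmk_rel K G (LRel.starMulSame (K := K) (G := G) e)
      rw [map_mul, phiFree_genT, phiFree_genS, phiFree_genP,
        AddMonoidAlgebra.single_mul_single, ← map_mul, h0]
      try norm_num
  | @starMulDiff e f hef =>
      have h0 := lmk_rel K G (LRel.starMulDiff (K := K) (G := G) hef)
      simp only [map_zero] at h0
      rw [map_mul, phiFree_genT, phiFree_genS,
        AddMonoidAlgebra.single_mul_single, ← map_mul, h0]
      simp
  | ck v hreg =>
      have h0 := lmk_rel K G (LRel.ck (K := K) (G := G) v hreg)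
      rw [map_sum] at h0
      rw [map_sum, phiFree_genP, h0]
      rw [show (AddMonoidAlgebra.single (0 : ℤ)
          (∑ e ∈ hreg.2.toFinset, lmk K G (genS K G e * genT K G e))
            : AddMonoidAlgebra (LPAEnv K G) ℤ)
          = ∑ e ∈ hreg.2.toFinset,
              AddMonoidAlgebra.single (0 : ℤ) (lmk K G (genS K G e * genT K G e)) from
        map_sum (AddMonoidAlgebra.singleAddHom (0 : ℤ)) _ hreg.2.toFinset]
      refine Finset.sum_congr rfl fun e _ => ?_
      conv_rhs => rw [map_mul, phiFree_genS, phiFree_genT, AddMonoidAlgebra.single_mul_single]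
      rw [map_mul]
      norm_num

/-- The grading coaction on the Leavitt path algebra envelope. -/
noncomputable def Phi : LPAEnv K G →ₐ[K] AddMonoidAlgebra (LPAEnv K G) ℤ :=
  RingQuot.liftAlgHom K ⟨phiFree K G, fun _ _ h => phiFree_rel K G h⟩

theorem Phi_mk (w : FreeAlgebra K (LGen G)) :
    Phi K G (lmk K G w) = phiFree K G w :=
  RingQuot.liftAlgHom_mkAlgHom_apply K (phiFree K G)
      (fun _ _ h => phiFree_rel K G h) w

/-- Sum-of-coefficients map. -/
noncomputable def sigma : AddMonoidAlgebra (LPAEnv K G) ℤ →ₐ[K] LPAEnv K G :=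
  AddMonoidAlgebra.liftNCAlgHom (AlgHom.id K (LPAEnv K G)) 1 fun _ _ => by
    simp

theorem sigma_single (d : ℤ) (r : LPAEnv K G) :
    sigma K G (AddMonoidAlgebra.single d r) = r := by
  show AddMonoidAlgebra.liftNC
      ((AlgHom.id K (LPAEnv K G) : LPAEnv K G →+* LPAEnv K G) : LPAEnv K G →+ LPAEnv K G)
      ⇑(1 : Multiplicative ℤ →* LPAEnv K G) (AddMonoidAlgebra.single d r) = r
  rw [AddMonoidAlgebra.liftNC_single]
  show r * (1 : Multiplicative ℤ →* LPAEnv K G) (Multiplicative.ofAdd d) = r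
  rw [MonoidHom.one_apply, mul_one]

theorem sigma_Phi (z : LPAEnv K G) : sigma K G (Phi K G z) = z := by
  obtain ⟨w, rfl⟩ := RingQuot.mkAlgHom_surjective K (LRel K G) z
  have hmk : ∀ u : FreeAlgebra K (LGen G),
      RingQuot.mkAlgHom K (LRel K G) u = lmk K G u := fun u => rfl
  rw [hmk]
  induction w using FreeAlgebra.induction with
  | grade0 r =>
      rw [AlgHom.commutes, AlgHom.commutes, AlgHom.commutes]
  | grade1 g =>
      rw [Phi_mk]
      show sigma K G (phiFree K G (FreeAlgebra.ι K g)) = _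
      rw [show phiFree K G (FreeAlgebra.ι K g)
        = AddMonoidAlgebra.single (deg G g) (lmk K G (FreeAlgebra.ι K g)) by
          simp [phiFree, FreeAlgebra.lift_ι_apply]]
      rw [sigma_single]
  | mul a b ha hb =>
      rw [map_mul, map_mul, map_mul, ha, hb]
  | add a b ha hb =>
      rw [map_add, map_add, map_add, ha, hb]

/-! ### The representation on infinite paths -/

open scoped Classical

/-- Infinite paths in `G`. -/
abbrev InfPath : Type := {α : ℕ → G.E // G.IsInfinitePath α}

variable {G}

/-- Prepend an edge to an infinite sequence of edges. -/
def consFun (e : G.E) (f : ℕ → G.E) : ℕ → G.E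
  | 0 => e
  | n + 1 => f n

theorem isInfinitePath_consFun {e : G.E} {f : ℕ → G.E} :
    G.IsInfinitePath (consFun e f) ↔ G.src (f 0) ∈ G.rng e ∧ G.IsInfinitePath f := by
  constructor
  · intro h
    exact ⟨h 0, fun i => h (i + 1)⟩
  · rintro ⟨h1, h2⟩ i
    cases i with
    | zero => exact h1
    | succ n => exact h2 n

/-- The tail of an infinite path. -/
def tailPath (α : InfPath G) : InfPath G :=
  ⟨fun i => α.1 (i + 1), fun i => α.2 (i + 1)⟩

variable (G)

/-- The action of the generators on the span of infinite paths. -/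
noncomputable def repGen : LGen G → Module.End K (InfPath G →₀ K)
  | LGen.pr A => Finsupp.lift (InfPath G →₀ K) K (InfPath G) fun α =>
      if G.src (α.1 0) ∈ A.1 then Finsupp.single α 1 else 0
  | LGen.ed e => Finsupp.lift (InfPath G →₀ K) K (InfPath G) fun α =>
      if h : G.src (α.1 0) ∈ G.rng e then
        Finsupp.single ⟨consFun e α.1, isInfinitePath_consFun.2 ⟨h, α.2⟩⟩ 1 else 0
  | LGen.st e => Finsupp.lift (InfPath G →₀ K) K (InfPath G) fun α =>
      if α.1 0 = e then Finsupp.single (tailPath α) 1 else 0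

/-- The representation on the free algebra. -/
noncomputable def repFree : FreeAlgebra K (LGen G) →ₐ[K] Module.End K (InfPath G →₀ K) :=
  FreeAlgebra.lift K (repGen K G)

theorem lift_single {X : Type} (f : X → (InfPath G →₀ K)) (a : X) :
    Finsupp.lift (InfPath G →₀ K) K X f (Finsupp.single a 1) = f a := by
  rw [Finsupp.lift_apply, Finsupp.sum_single_index (by simp), one_smul]

theorem repP_single (A : Set G.V) (h : G.Mem0 A) (α : InfPath G) :
    repFree K G (genP K G A h) (Finsupp.single α 1)
      = if G.src (α.1 0) ∈ A then Finsupp.single α 1 else 0 := by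
  rw [repFree, genP, FreeAlgebra.lift_ι_apply]
  show repGen K G (LGen.pr ⟨A, h⟩) (Finsupp.single α 1) = _
  rw [repGen, lift_single]

theorem repS_single (e : G.E) (α : InfPath G) :
    repFree K G (genS K G e) (Finsupp.single α 1)
      = if h : G.src (α.1 0) ∈ G.rng e then
          Finsupp.single (⟨consFun e α.1, isInfinitePath_consFun.2 ⟨h, α.2⟩⟩ : InfPath G) 1
        else 0 := by
  rw [repFree, genS, FreeAlgebra.lift_ι_apply]
  show repGen K G (LGen.ed e) (Finsupp.single α 1) = _
  rw [repGen, lift_single]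

theorem repT_single (e : G.E) (α : InfPath G) :
    repFree K G (genT K G e) (Finsupp.single α 1)
      = if α.1 0 = e then Finsupp.single (tailPath α) 1 else 0 := by
  rw [repFree, genT, FreeAlgebra.lift_ι_apply]
  show repGen K G (LGen.st e) (Finsupp.single α 1) = _
  rw [repGen, lift_single]

theorem endExt {f g : Module.End K (InfPath G →₀ K)}
    (h : ∀ α : InfPath G, f (Finsupp.single α 1) = g (Finsupp.single α 1)) : f = g := by
  refine Finsupp.lhom_ext' fun α => LinearMap.ext fun b => ?_
  have : (Finsupp.single α b : InfPath G →₀ K) = b • Finsupp.single α 1 := by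
    rw [Finsupp.smul_single, smul_eq_mul, mul_one]
  show f (Finsupp.single α b) = g (Finsupp.single α b)
  rw [this, map_smul, map_smul, h]

theorem repFree_rel {a b : FreeAlgebra K (LGen G)} (h : LRel K G a b) :
    repFree K G a = repFree K G b := by
  induction h with
  | pEmpty =>
      refine endExt K _ fun α => ?_
      rw [repP_single, if_neg (Set.notMem_empty _), map_zero, LinearMap.zero_apply]
  | @pMul A B hA hB =>
      refine endExt K _ fun α => ?_
      rw [map_mul, Module.End.mul_apply, repP_single]
      by_cases hB' : G.src (α.1 0) ∈ B
      · rw [if_pos hB', repP_single, repP_single]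
        by_cases hA' : G.src (α.1 0) ∈ A
        · rw [if_pos hA', if_pos (Set.mem_inter hA' hB')]
        · rw [if_neg hA', if_neg fun hc => hA' hc.1]
      · rw [if_neg hB', map_zero, repP_single, if_neg fun hc => hB' hc.2]
  | @pUnion A B hA hB =>
      refine endExt K _ fun α => ?_
      rw [map_sub, map_add, LinearMap.sub_apply, LinearMap.add_apply,
        repP_single, repP_single, repP_single, repP_single]
      by_cases hA' : G.src (α.1 0) ∈ A <;> by_cases hB' : G.src (α.1 0) ∈ B <;>
        simp [hA', hB', Set.mem_union, Set.mem_inter_iff]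
  | srcMul e =>
      refine endExt K _ fun α => ?_
      rw [map_mul, Module.End.mul_apply, repS_single]
      by_cases h : G.src (α.1 0) ∈ G.rng e
      · rw [dif_pos h, repP_single]
        exact if_pos rfl
      · rw [dif_neg h, map_zero]
  | mulRng e =>
      refine endExt K _ fun α => ?_
      rw [map_mul, Module.End.mul_apply, repP_single]
      by_cases h : G.src (α.1 0) ∈ G.rng e
      · rw [if_pos h]
      · rw [if_neg h, map_zero, repS_single, dif_neg h]
  | rngStar e =>
      refine endExt K _ fun α => ?_
      rw [map_mul, Module.End.mul_apply, repT_single]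
      by_cases he : α.1 0 = e
      · rw [if_pos he, repP_single,
          if_pos (show G.src ((tailPath α).1 0) ∈ G.rng e by rw [← he]; exact α.2 0)]
      · rw [if_neg he, map_zero]
  | starSrc e =>
      refine endExt K _ fun α => ?_
      rw [map_mul, Module.End.mul_apply, repP_single]
      by_cases hs : G.src (α.1 0) ∈ ({G.src e} : Set G.V)
      · rw [if_pos hs]
      · rw [if_neg hs, map_zero, repT_single,
          if_neg fun he => hs (congrArg G.src he)]
  | starMulSame e =>
      refine endExt K _ fun α => ?_
      rw [map_mul, Module.End.mul_apply, repS_single, repP_single]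
      by_cases h : G.src (α.1 0) ∈ G.rng e
      · rw [dif_pos h, if_pos h, repT_single,
          if_pos (show consFun e α.1 0 = e from rfl)]
        congr 1
      · rw [dif_neg h, if_neg h, map_zero]
  | @starMulDiff e f hef =>
      refine endExt K _ fun α => ?_
      rw [map_mul, Module.End.mul_apply, repS_single, map_zero, LinearMap.zero_apply]
      by_cases h : G.src (α.1 0) ∈ G.rng f
      · rw [dif_pos h, repT_single, if_neg fun hc => hef hc.symm]
      · rw [dif_neg h, map_zero]
  | ck v hreg =>
      refine endExt K _ fun α => ?_
      rw [repP_single, map_sum, LinearMap.sum_apply]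
      have hterm : ∀ e ∈ hreg.2.toFinset,
          repFree K G (genS K G e * genT K G e) (Finsupp.single α 1)
            = if α.1 0 = e then Finsupp.single α 1 else 0 := by
        intro e _
        rw [map_mul, Module.End.mul_apply, repT_single]
        by_cases he : α.1 0 = e
        · rw [if_pos he, if_pos he, repS_single,
            dif_pos (show G.src ((tailPath α).1 0) ∈ G.rng e by rw [← he]; exact α.2 0)]
          congr 1
          refine Subtype.ext (funext fun i => ?_)
          cases i with
          | zero => exact he.symm
          | succ n => rfl
        · rw [if_neg he, if_neg he, map_zero]
      rw [Finset.sum_congr rfl hterm,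
        Finset.sum_ite_eq hreg.2.toFinset (α.1 0) fun _ => Finsupp.single α 1]
      by_cases hv : G.src (α.1 0) = v
      · rw [if_pos (show G.src (α.1 0) ∈ ({v} : Set G.V) from hv),
          if_pos ((hreg.2.mem_toFinset).2 hv)]
      · rw [if_neg (show ¬G.src (α.1 0) ∈ ({v} : Set G.V) from hv),
          if_neg fun hc => hv ((hreg.2.mem_toFinset).1 hc)]

/-- The representation on the envelope. -/
noncomputable def rep : LPAEnv K G →ₐ[K] Module.End K (InfPath G →₀ K) :=
  RingQuot.liftAlgHom K ⟨repFree K G, fun _ _ h => repFree_rel K G h⟩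

theorem rep_mk (w : FreeAlgebra K (LGen G)) :
    rep K G (lmk K G w) = repFree K G w :=
  RingQuot.liftAlgHom_mkAlgHom_apply K (repFree K G)
    (fun _ _ h => repFree_rel K G h) w

/-! ### Cycle combinatorics -/

variable {G}

theorem get_congr (c : List G.E) {a b : ℕ} (ha : a < c.length) (hb : b < c.length)
    (h : a = b) : c.get ⟨a, ha⟩ = c.get ⟨b, hb⟩ := by subst h; rfl

/-- The periodic infinite path obtained by repeating a cycle. -/
def omegaFun (c : List G.E) (hne : c ≠ []) : ℕ → G.E :=
  fun i => c.get ⟨i % c.length, Nat.mod_lt _ (List.length_pos_iff.2 hne)⟩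

theorem head_eq_get (c : List G.E) (hne : c ≠ []) :
    c.head hne = c.get ⟨0, List.length_pos_iff.2 hne⟩ := by
  cases c with
  | nil => exact absurd rfl hne
  | cons e l => rfl

theorem omegaFun_zero (c : List G.E) (hne : c ≠ []) :
    omegaFun c hne 0 = c.head hne := by
  rw [head_eq_get c hne, omegaFun]
  exact get_congr c _ _ (Nat.zero_mod _)

theorem isInfinitePath_omegaFun (c : List G.E) (hne : c ≠ []) (hpath : G.IsPathList c)
    (hloop : G.src (c.head hne) ∈ G.rng (c.getLast hne)) :
    G.IsInfinitePath (omegaFun c hne) := by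
  intro i
  have hlen : 0 < c.length := List.length_pos_iff.2 hne
  have hj : i % c.length < c.length := Nat.mod_lt _ hlen
  have hsucc : (i + 1) % c.length = (i % c.length + 1) % c.length := by
    conv_lhs => rw [← Nat.mod_add_mod]
  by_cases h : i % c.length + 1 < c.length
  · have h2 : (i + 1) % c.length = i % c.length + 1 := by rw [hsucc, Nat.mod_eq_of_lt h]
    have hch := List.isChain_iff_getElem.1 hpath (i % c.length) (by omega)
    show G.src (omegaFun c hne (i + 1)) ∈ G.rng (omegaFun c hne i)
    rw [show omegaFun c hne (i + 1) = c.get ⟨i % c.length + 1, by omega⟩ from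
      get_congr c _ _ h2]
    exact hch
  · have hjn : i % c.length + 1 = c.length := by omega
    have h2 : (i + 1) % c.length = 0 := by rw [hsucc, hjn, Nat.mod_self]
    show G.src (omegaFun c hne (i + 1)) ∈ G.rng (omegaFun c hne i)
    rw [show omegaFun c hne (i + 1) = c.get ⟨0, hlen⟩ from get_congr c _ _ h2,
      show omegaFun c hne i = c.get ⟨c.length - 1, by omega⟩ from get_congr c _ _ (by omega),
      ← head_eq_get c hne,
      show c.get ⟨c.length - 1, by omega⟩ = c.getLast hne by
        rw [List.getLast_eq_getElem]; exact List.get_eq_getElem ..]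
    exact hloop

/-- Glue a finite path in front of an infinite sequence. -/
def glue (l : List G.E) (f : ℕ → G.E) : ℕ → G.E :=
  fun i => if h : i < l.length then l.get ⟨i, h⟩ else f (i - l.length)

theorem glue_nil (f : ℕ → G.E) : glue ([] : List G.E) f = f := by
  funext i; simp [glue]

theorem glue_consFun (e : G.E) (l : List G.E) (f : ℕ → G.E) :
    glue (e :: l) f = consFun e (glue l f) := by
  funext i
  cases i with
  | zero =>
      show glue (e :: l) f 0 = e
      simp [glue]
  | succ m =>
      show glue (e :: l) f (m + 1) = glue l f m
      simp only [glue, List.length_cons]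
      by_cases h : m < l.length
      · rw [dif_pos (by omega : m + 1 < l.length + 1), dif_pos h]
        rfl
      · rw [dif_neg (by omega : ¬m + 1 < l.length + 1), dif_neg h,
          Nat.succ_sub_succ]

theorem glue_omega (c : List G.E) (hne : c ≠ []) :
    glue c (omegaFun c hne) = omegaFun c hne := by
  funext i
  by_cases h : i < c.length
  · simp only [glue, dif_pos h, omegaFun]
    exact get_congr c _ _ (Nat.mod_eq_of_lt h).symm
  · simp only [glue, dif_neg h, omegaFun]
    exact get_congr c _ _ (by rw [← Nat.mod_eq_sub_mod (by omega)])

variable (G)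

theorem rep_spath (v : G.V) (l : List G.E) :
    ∀ (β γ : InfPath G), G.src (β.1 0) = v → γ.1 = glue l β.1 →
    rep K G (spath K G v l).val (Finsupp.single β 1) = Finsupp.single γ 1 := by
  induction l with
  | nil =>
      intro β γ hβ hγ
      have hβγ : γ = β := Subtype.ext (by rw [hγ, glue_nil])
      subst hβγ
      show rep K G (lmk K G (genP K G {v} (Mem0.singleton v))) _ = _
      rw [rep_mk, repP_single, if_pos (show G.src (γ.1 0) ∈ ({v} : Set G.V) from hβ)]
  | cons e l ih =>
      intro β γ hβ hγ
      rw [glue_consFun] at hγ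
      have hγinf : G.IsInfinitePath (consFun e (glue l β.1)) := hγ ▸ γ.2
      obtain ⟨hc, hrest⟩ := isInfinitePath_consFun.1 hγinf
      have hval : (spath K G v (e :: l)).val
          = (se K G e).val * (spath K G v l).val := rfl
      rw [hval, map_mul, Module.End.mul_apply,
        ih β ⟨glue l β.1, hrest⟩ hβ rfl]
      show rep K G (lmk K G (genS K G e)) _ = _
      rw [rep_mk, repS_single, dif_pos hc]
      congr 1
      exact Subtype.ext hγ.symm

/-! ### Algebraic identities in the envelope -/

theorem genP_congr {A B : Set G.V} (hA : G.Mem0 A) (hB : G.Mem0 B) (h : A = B) :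
    genP K G A hA = genP K G B hB := by subst h; rfl

theorem p_mul_p (v : G.V) :
    lmk K G (genP K G {v} (Mem0.singleton v)) * lmk K G (genP K G {v} (Mem0.singleton v))
      = lmk K G (genP K G {v} (Mem0.singleton v)) := by
  rw [← map_mul, lmk_rel K G (LRel.pMul (Mem0.singleton v) (Mem0.singleton v))]
  exact congrArg _ (genP_congr K G _ _ (Set.inter_self _))

theorem P_mul_se (e : G.E) :
    lmk K G (genP K G {G.src e} (Mem0.singleton _)) * lmk K G (genS K G e)
      = lmk K G (genS K G e) := by
  rw [← map_mul]
  exact lmk_rel K G (LRel.srcMul e)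

theorem spath_mul_P (v : G.V) (l : List G.E) :
    (spath K G v l).val * lmk K G (genP K G {v} (Mem0.singleton v)) = (spath K G v l).val := by
  induction l with
  | nil => exact p_mul_p K G v
  | cons e t ih =>
      show (se K G e).val * (spath K G v t).val * _ = _
      rw [mul_assoc, ih]
      rfl

theorem P_mul_spath (c : List G.E) (hne : c ≠ []) :
    lmk K G (genP K G {G.src (c.head hne)} (Mem0.singleton _))
        * (spath K G (G.src (c.head hne)) c).val
      = (spath K G (G.src (c.head hne)) c).val := by
  cases c with
  | nil => exact absurd rfl hne
  | cons e t =>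
      show lmk K G (genP K G {G.src e} (Mem0.singleton _))
          * (lmk K G (genS K G e) * (spath K G (G.src e) t).val)
        = lmk K G (genS K G e) * (spath K G (G.src e) t).val
      rw [← mul_assoc, P_mul_se]

theorem Phi_P (v : G.V) :
    Phi K G (lmk K G (genP K G {v} (Mem0.singleton v)))
      = AddMonoidAlgebra.single 0 (lmk K G (genP K G {v} (Mem0.singleton v))) := by
  rw [Phi_mk, phiFree_genP]

theorem Phi_spath (v : G.V) (l : List G.E) :
    Phi K G (spath K G v l).val
      = AddMonoidAlgebra.single (l.length : ℤ) ((spath K G v l).val) := by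
  induction l with
  | nil =>
      show Phi K G (lmk K G (genP K G {v} (Mem0.singleton v)))
        = AddMonoidAlgebra.single ((0 : ℕ) : ℤ) (lmk K G (genP K G {v} (Mem0.singleton v)))
      rw [Phi_mk, phiFree_genP, Nat.cast_zero]
  | cons e t ih =>
      show Phi K G ((se K G e).val * (spath K G v t).val)
        = AddMonoidAlgebra.single (((e :: t).length : ℕ) : ℤ)
            ((se K G e).val * (spath K G v t).val)
      rw [map_mul, ih]
      rw [show Phi K G (se K G e).val = AddMonoidAlgebra.single 1 (lmk K G (genS K G e)) by
        rw [show (se K G e).val = lmk K G (genS K G e) from rfl, Phi_mk, phiFree_genS]]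
      rw [AddMonoidAlgebra.single_mul_single]
      congr 1
      simp [List.length_cons]
      ring

theorem exists_not_mem (s : Finset ℤ) (φ : ℕ → ℤ) (hφ : Function.Injective φ) :
    ∃ k, φ k ∉ s := by
  by_contra hcon
  push_neg at hcon
  exact (Set.infinite_range_of_injective hφ)
    (s.finite_toSet.subset (Set.range_subset_iff.2 hcon))

theorem cancel_aux {P x z : LPAEnv K G} {n : ℤ} (hn : n ≠ 0)
    (hP : Phi K G P = AddMonoidAlgebra.single 0 P)
    (hx : Phi K G x = AddMonoidAlgebra.single n x)
    (hz : P * z = z) (h0 : (P - x) * z = 0) : z = 0 := by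
  classical
  have hPz : ∀ d : ℤ, P * (Phi K G z).coeff d = (Phi K G z).coeff d := by
    intro d
    have h1 : Phi K G (P * z) = Phi K G z := by rw [hz]
    rw [map_mul, hP] at h1
    have h2 := congrArg (fun F : AddMonoidAlgebra (LPAEnv K G) ℤ => F.coeff d) h1
    rw [AddMonoidAlgebra.coeff_single_mul_apply, neg_zero, zero_add] at h2
    exact h2
  have hrec : ∀ d : ℤ, (Phi K G z).coeff d = x * (Phi K G z).coeff (d - n) := by
    intro d
    have h1 : Phi K G ((P - x) * z) = 0 := by rw [h0, map_zero]
    rw [map_mul, map_sub, hP, hx] at h1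
    have h1' : AddMonoidAlgebra.single 0 P * Phi K G z
        = AddMonoidAlgebra.single n x * Phi K G z := by
      have h1'' := (sub_mul (AddMonoidAlgebra.single 0 P) (AddMonoidAlgebra.single n x)
        (Phi K G z)).symm.trans h1
      exact sub_eq_zero.1 h1''
    have h2 := congrArg (fun F : AddMonoidAlgebra (LPAEnv K G) ℤ => F.coeff d) h1'
    rw [AddMonoidAlgebra.coeff_single_mul_apply, AddMonoidAlgebra.coeff_single_mul_apply,
      neg_zero, zero_add, hPz d, neg_add_eq_sub] at h2
    exact h2
  have hiter : ∀ (k : ℕ) (d : ℤ), (Phi K G z).coeff d = x ^ k * (Phi K G z).coeff (d - k * n) := by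
    intro k
    induction k with
    | zero => intro d; simp
    | succ m ih =>
        intro d
        rw [hrec d, ih (d - n), ← mul_assoc, ← pow_succ']
        congr 2
        push_cast
        ring
  have hzero : ∀ d, (Phi K G z).coeff d = 0 := by
    intro d
    obtain ⟨k, hk⟩ := exists_not_mem (Phi K G z).coeff.support (fun k : ℕ => d - k * n)
      (by
        intro a b hab
        simp only at hab
        have h3 : (a : ℤ) * n = b * n := by linarith
        exact_mod_cast mul_right_cancel₀ hn h3)
    rw [hiter k d, Finsupp.notMem_support_iff.1 hk, mul_zero]
  have hPhi0 : Phi K G z = 0 := AddMonoidAlgebra.ext (Finsupp.ext hzero)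
  rw [← sigma_Phi K G z, hPhi0, map_zero]

/-! ### Nonvanishing of powers of a cycle -/

theorem coeff_sub (F H : AddMonoidAlgebra (LPAEnv K G) ℤ) (d : ℤ) :
    (F - H).coeff d = F.coeff d - H.coeff d := by
  exact Finsupp.sub_apply F.coeff H.coeff d

theorem coeff_add (F H : AddMonoidAlgebra (LPAEnv K G) ℤ) (d : ℤ) :
    (F + H).coeff d = F.coeff d + H.coeff d := by
  exact Finsupp.add_apply F.coeff H.coeff d

theorem spath_pow_ne_zero (c : List G.E) (hne : c ≠ []) (hpath : G.IsPathList c)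
    (hloop : G.src (c.head hne) ∈ G.rng (c.getLast hne)) (k : ℕ) :
    ((spath K G (G.src (c.head hne)) c).val) ^ k ≠ 0 := by
  have hω : G.IsInfinitePath (omegaFun c hne) := isInfinitePath_omegaFun c hne hpath hloop
  set ω : InfPath G := ⟨omegaFun c hne, hω⟩ with hωdef
  have hfix : rep K G (spath K G (G.src (c.head hne)) c).val (Finsupp.single ω 1)
      = Finsupp.single ω 1 := by
    refine rep_spath K G _ c ω ω ?_ ?_
    · exact congrArg G.src (omegaFun_zero c hne)
    · exact (glue_omega c hne).symm
  have hpow : ∀ m : ℕ, rep K G ((spath K G (G.src (c.head hne)) c).val ^ m)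
      (Finsupp.single ω 1) = Finsupp.single ω 1 := by
    intro m
    induction m with
    | zero => rw [pow_zero, map_one]; rfl
    | succ m ih => rw [pow_succ, map_mul, Module.End.mul_apply, hfix, ih]
  intro hzero
  have hz := hpow k
  rw [hzero, map_zero, LinearMap.zero_apply] at hz
  have h1 := congrArg (fun f : InfPath G →₀ K => f ω) hz.symm
  simp only [Finsupp.single_eq_same, Finsupp.coe_zero, Pi.zero_apply] at h1
  exact one_ne_zero h1

/-! ### The graded cancellation argument -/

theorem grading_contradiction {P x : LPAEnv K G} {n : ℤ} (hn : n ≠ 0)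
    (hPP : P * P = P) (hPx : P * x = x) (hxP : x * P = x)
    (hPhiP : Phi K G P = AddMonoidAlgebra.single 0 P)
    (hPhix : Phi K G x = AddMonoidAlgebra.single n x)
    (hxpow : ∀ k : ℕ, x ^ (k + 1) ≠ 0)
    (hreg : ∃ b : LPAEnv K G, (P - x) = (P - x) * b * (P - x)) : False := by
  classical
  obtain ⟨b, hb⟩ := hreg
  have hPy : P * (P * b * P) = P * b * P := by rw [← mul_assoc, ← mul_assoc, hPP]
  have hyP : (P * b * P) * P = P * b * P := by rw [mul_assoc, hPP]
  set y := P * b * P with hy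
  have hAP : (P - x) * P = P - x := by rw [sub_mul, hPP, hxP]
  have hPA : P * (P - x) = P - x := by rw [mul_sub, hPP, hPx]
  have haya : (P - x) * y * (P - x) = P - x := by
    calc (P - x) * y * (P - x)
        = ((P - x) * P) * b * (P * (P - x)) := by rw [hy]; noncomm_ring
      _ = (P - x) * b * (P - x) := by rw [hAP, hPA]
      _ = P - x := hb.symm
  have hz0 : (P - x) * (P - y * (P - x)) = 0 := by
    rw [mul_sub, hAP, ← mul_assoc, haya, sub_self]
  have hPz : P * (P - y * (P - x)) = P - y * (P - x) := by
    rw [mul_sub, hPP, ← mul_assoc, hPy]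
  have hcancel := cancel_aux K G hn hPhiP hPhix hPz hz0
  have hyA : y * (P - x) = P := (sub_eq_zero.1 hcancel).symm
  have h1 : y = P + y * x := by
    have hPyx : P = y - y * x := by rw [← hyA, mul_sub, hyP]
    rw [hPyx, sub_add_cancel]
  have key : Phi K G y
      = (AddMonoidAlgebra.single 0 P : AddMonoidAlgebra (LPAEnv K G) ℤ)
        + Phi K G y * AddMonoidAlgebra.single n x := by
    conv_lhs => rw [h1]
    rw [map_add, map_mul, hPhiP, hPhix]
  have coef : ∀ d : ℤ, (Phi K G y).coeff d
      = (AddMonoidAlgebra.single (0 : ℤ) P).coeff d + (Phi K G y).coeff (d - n) * x := by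
    intro d
    have h2 := congrArg (fun F : AddMonoidAlgebra (LPAEnv K G) ℤ => F.coeff d) key
    rw [coeff_add, AddMonoidAlgebra.coeff_mul_single_apply] at h2
    exact h2
  have hne0 : ∀ d : ℤ, d ≠ 0 → (Phi K G y).coeff d = (Phi K G y).coeff (d - n) * x := by
    intro d hd
    have h2 := coef d
    rw [AddMonoidAlgebra.coeff_single, Finsupp.single_eq_of_ne' (fun hc => hd hc.symm), zero_add] at h2
    exact h2
  have hnegiter : ∀ k : ℕ, (Phi K G y).coeff (-n) = (Phi K G y).coeff (-((k : ℤ) + 1) * n) * x ^ k := by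
    intro k
    induction k with
    | zero =>
        rw [show (-(((0 : ℕ) : ℤ) + 1) * n) = -n by push_cast; ring, pow_zero, mul_one]
    | succ m ih =>
        have hd : -((m : ℤ) + 1) * n ≠ 0 :=
          mul_ne_zero (by push_cast; intro hc; nlinarith [hc]) hn
        rw [ih, hne0 _ hd,
          show -((m : ℤ) + 1) * n - n = -(((m + 1 : ℕ) : ℤ) + 1) * n by push_cast; ring,
          mul_assoc, ← pow_succ']
  have hinj₁ : Function.Injective (fun k : ℕ => -((k : ℤ) + 1) * n) := by
    intro a b hab
    simp only at hab
    have h3 := mul_right_cancel₀ hn hab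
    have h4 : ((a : ℤ) + 1) = ((b : ℤ) + 1) := neg_injective h3
    exact_mod_cast add_right_cancel h4
  obtain ⟨k₀, hk₀⟩ := exists_not_mem (Phi K G y).coeff.support (fun k : ℕ => -((k : ℤ) + 1) * n) hinj₁
  have hfneg : (Phi K G y).coeff (-n) = 0 := by
    rw [hnegiter k₀, Finsupp.notMem_support_iff.1 hk₀, zero_mul]
  have hf0 : (Phi K G y).coeff 0 = P := by
    have h2 := coef 0
    rw [AddMonoidAlgebra.coeff_single, Finsupp.single_eq_same, show (0 : ℤ) - n = -n by ring, hfneg, zero_mul, add_zero] at h2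
    exact h2
  have hpos : ∀ k : ℕ, (Phi K G y).coeff (((k : ℤ) + 1) * n) = x ^ (k + 1) := by
    intro k
    induction k with
    | zero =>
        have hd : (((0 : ℕ) : ℤ) + 1) * n ≠ 0 := mul_ne_zero (by norm_num) hn
        rw [hne0 _ hd, show (((0 : ℕ) : ℤ) + 1) * n - n = 0 by push_cast; ring, hf0, hPx,
          pow_one]
    | succ m ih =>
        have hd : (((m + 1 : ℕ) : ℤ) + 1) * n ≠ 0 := mul_ne_zero (by push_cast; positivity) hn
        rw [hne0 _ hd,
          show (((m + 1 : ℕ) : ℤ) + 1) * n - n = ((m : ℤ) + 1) * n by push_cast; ring,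
          ih, ← pow_succ]
  have hinj₂ : Function.Injective (fun k : ℕ => ((k : ℤ) + 1) * n) := by
    intro a b hab
    simp only at hab
    have h3 := mul_right_cancel₀ hn hab
    exact_mod_cast add_right_cancel h3
  obtain ⟨k₁, hk₁⟩ := exists_not_mem (Phi K G y).coeff.support (fun k : ℕ => ((k : ℤ) + 1) * n) hinj₂
  exact hk₁ (Finsupp.mem_support_iff.2 (by rw [hpos k₁]; exact hxpow k₁))

/-! ### Main theorem -/

theorem main (hvnr : IsVonNeumannRegularRing (Ultragraph.LPA K G)) : G.Acyclic := by
  intro c hcyc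
  obtain ⟨hne, hpath, hloop⟩ := hcyc
  classical
  have hlen : 0 < c.length := List.length_pos_iff.2 hne
  have hn0 : ((c.length : ℤ)) ≠ 0 := by exact_mod_cast hlen.ne'
  obtain ⟨b, hb⟩ := hvnr (p K G {G.src (c.head hne)}
    (Ultragraph.Mem0.singleton _) - spath K G (G.src (c.head hne)) c)
  refine grading_contradiction K G hn0 (p_mul_p K G (G.src (c.head hne)))
    (P_mul_spath K G c hne) (spath_mul_P K G (G.src (c.head hne)) c)
    (Phi_P K G (G.src (c.head hne))) (Phi_spath K G (G.src (c.head hne)) c)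
    (fun k => spath_pow_ne_zero K G c hne hpath hloop (k + 1)) ⟨b.val, ?_⟩
  have hval := congrArg Subtype.val hb
  exact hval

end VNR

/-- if `L_K(𝒢)` is von Neumann regular then `𝒢` is acyclic. -/
theorem statement5 (K : Type) [Field K] (G : Ultragraph)
    (h : IsVonNeumannRegularRing (Ultragraph.LPA K G)) : G.Acyclic :=
  VNR.main K G h
end
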